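/- arXiv:1607.08404 — 9 statements merged into one kernel-verified Lean document; each statement's English description precedes it below -/
import Mathlib

section
/- Let n, d be positive integers and let S be a subset of the unit sphere S^{n-1} ⊆ ℝⁿ. Let L be a linear functional on the space of homogeneous real polynomials of degree 2d in n variables such that L(p) ≥ 0 for every homogeneous polynomial p of degree 2d with p(y) ≥ 0 for all y ∈ S. Then there exist a finite set N contained in the closure of S in the sphere and a weight function w : N → (0,∞) such that L(p) = Σ_{y∈N} w(y)·p(y) for every homogeneous polynomial p of degree 2d. -/
/-!
The evaluations `p ↦ p(y)` at points `y` of the compact set `T = closure S` all take the value `1`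
on the form `q = (∑ xᵢ²)ᵈ`, so they lie in an affine hyperplane of the finite-dimensional dual of
the space of forms. Hence the cone they generate has the compact base `conv(ev T)` and is closed.
If `L` were outside it, a separating hyperplane would produce a form `p` that is nonnegative on `T`
with `L p < 0`. So `L` is a nonnegative combination of finitely many evaluations.
-/

open MvPolynomial

noncomputable section

/-- Euclidean norm on `Fin n → ℝ`. -/
def eNorm {n : ℕ} (x : Fin n → ℝ) : ℝ := Real.sqrt (∑ i, x i ^ 2)

open Set Function

theorem IsCompact.convexHull {E : Type*} [AddCommGroup E] [Module ℝ E] [TopologicalSpace E]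
    [ContinuousAdd E] [ContinuousSMul ℝ E] [FiniteDimensional ℝ E] {s : Set E}
    (hs : IsCompact s) : IsCompact (_root_.convexHull ℝ s) := by
  rcases s.eq_empty_or_nonempty with rfl | ⟨a, ha⟩
  · simp
  set k := Module.finrank ℝ E + 1
  suffices _root_.convexHull ℝ s =
      (fun p : (Fin k → ℝ) × (Fin k → E) => ∑ i, p.1 i • p.2 i) ''
        (stdSimplex ℝ (Fin k) ×ˢ univ.pi fun _ => s) by
    rw [this]
    exact ((isCompact_stdSimplex ℝ (Fin k)).prod (isCompact_univ_pi fun _ => hs)).image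
      (by fun_prop)
  refine subset_antisymm (fun x hx => ?_) ?_
  · -- Carathéodory gives at most `k` points; pad the family to `Fin k` with zero weights
    obtain ⟨ι, _, z, w, hzs, hz, hw, hw1, rfl⟩ := eq_pos_convex_span_of_mem_convexHull hx
    obtain ⟨e⟩ : Nonempty (ι ↪ Fin k) := Function.Embedding.nonempty_of_card_le <| by
      simpa using hz.card_le_finrank_succ.trans (Nat.add_le_add_right (Submodule.finrank_le _) 1)
    have hzero (i) (hi : i ∉ range e) : extend e w 0 i = 0 := extend_apply' _ _ _ hi
    refine ⟨(extend e w 0, extend e z fun _ => a), ⟨⟨fun i => ?_, ?_⟩, fun i _ => ?_⟩, ?_⟩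
    · by_cases hi : i ∈ range e
      · obtain ⟨j, rfl⟩ := hi
        simpa [e.injective.extend_apply] using (hw j).le
      · simp [hzero i hi]
    · rw [← hw1]
      exact (Fintype.sum_of_injective e e.injective _ _ hzero
        fun j => (e.injective.extend_apply _ _ _).symm).symm
    · by_cases hi : i ∈ range e
      · obtain ⟨j, rfl⟩ := hi
        simpa [e.injective.extend_apply] using hzs (mem_range_self j)
      · simpa [extend_apply' _ _ _ hi] using ha
    · exact (Fintype.sum_of_injective e e.injective _ _ (fun i hi => by simp [hzero i hi])
        fun j => by simp [e.injective.extend_apply]).symm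
  · rintro _ ⟨⟨w, z⟩, ⟨hw, hz⟩, rfl⟩
    exact mem_convexHull_of_exists_fintype w z hw.1 hw.2 (fun i => hz i (mem_univ i)) rfl

namespace PointedCone

theorem exists_eq_smul_of_mem_hull {E : Type*} [AddCommGroup E] [Module ℝ E] {K : Set E}
    (hK : K.Nonempty) (g : E →ₗ[ℝ] ℝ) (hg : ∀ x ∈ K, g x = 1) {z : E} (hz : z ∈ hull ℝ K) :
    0 ≤ g z ∧ ∃ x ∈ convexHull ℝ K, z = g z • x := by
  obtain ⟨c, hcK, hc0, rfl⟩ := mem_hull_set.1 hz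
  have hgz : g (c.sum fun y r => r • y) = ∑ y ∈ c.support, c y := by
    simp only [Finsupp.sum, map_sum, map_smul, smul_eq_mul]
    exact Finset.sum_congr rfl fun y hy => by rw [hg y (hcK hy), mul_one]
  have hnonneg : 0 ≤ ∑ y ∈ c.support, c y := Finset.sum_nonneg fun y _ => hc0 y
  refine ⟨hgz ▸ hnonneg, ?_⟩
  rcases hnonneg.eq_or_lt' with hsum | hsum
  · obtain ⟨a, ha⟩ := hK
    refine ⟨a, subset_convexHull ℝ K ha, ?_⟩
    rw [hgz, hsum, zero_smul, Finsupp.sum]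
    exact Finset.sum_eq_zero fun y hy => by
      rw [(Finset.sum_eq_zero_iff_of_nonneg fun y _ => hc0 y).1 hsum y hy, zero_smul]
  · refine ⟨c.support.centerMass c id,
      c.support.centerMass_mem_convexHull (fun y _ => hc0 y) hsum fun y hy => hcK hy, ?_⟩
    rw [hgz, Finset.centerMass, smul_inv_smul₀ hsum.ne']
    rfl

theorem isClosed_hull_of_isCompact {E : Type*} [NormedAddCommGroup E] [NormedSpace ℝ E]
    [FiniteDimensional ℝ E] {K : Set E} (hK : IsCompact K) (g : StrongDual ℝ E)
    (hg : ∀ x ∈ K, g x = 1) : IsClosed (hull ℝ K : Set E) := by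
  rcases K.eq_empty_or_nonempty with rfl | hne
  · simp
  refine isClosed_of_closure_subset fun z hz => ?_
  set R := g z + 1
  -- below the level `g = R` the cone is the image of the compact set `[0, R] × conv K`
  have hslab : {w | g w < R} ∩ (hull ℝ K : Set E) ⊆
      (fun p : ℝ × E => p.1 • p.2) '' (Icc 0 R ×ˢ convexHull ℝ K) := by
    rintro w ⟨hwR, hw⟩
    obtain ⟨hw0, x, hx, hwx⟩ := exists_eq_smul_of_mem_hull hne g.toLinearMap hg hw
    exact ⟨(g w, x), ⟨⟨hw0, hwR.le⟩, hx⟩, hwx.symm⟩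
  have hcpt : IsCompact ((fun p : ℝ × E => p.1 • p.2) '' (Icc 0 R ×ˢ convexHull ℝ K)) :=
    (isCompact_Icc.prod hK.convexHull).image (by fun_prop)
  obtain ⟨⟨t, x⟩, ⟨ht, hx⟩, rfl⟩ := closure_minimal hslab hcpt.isClosed
    ((isOpen_lt g.continuous continuous_const).inter_closure ⟨lt_add_one (g z), hz⟩)
  exact (hull ℝ K).smul_mem ht.1 (convexHull_min subset_hull (hull ℝ K).convex hx)

theorem mem_hull_of_forall_nonneg {E : Type*} [NormedAddCommGroup E] [NormedSpace ℝ E]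
    [FiniteDimensional ℝ E] {K : Set E} (hK : IsCompact K) (g : StrongDual ℝ E)
    (hg : ∀ x ∈ K, g x = 1) {z : E}
    (hz : ∀ f : StrongDual ℝ E, (∀ x ∈ K, 0 ≤ f x) → 0 ≤ f z) : z ∈ hull ℝ K := by
  by_contra h
  obtain ⟨f, hfK, hfz⟩ := ProperCone.hyperplane_separation_point
    ⟨hull ℝ K, isClosed_hull_of_isCompact hK g hg⟩ h
  exact hfz.not_ge (hz f fun x hx => hfK x (subset_hull hx))

theorem exists_finset_of_mem_hull_image {ι E : Type*} [AddCommGroup E] [Module ℝ E]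
    {v : ι → E} {T : Set ι} {z : E} (hz : z ∈ hull ℝ (v '' T)) :
    ∃ N : Finset ι, ↑N ⊆ T ∧ ∃ w : ι → ℝ, (∀ y ∈ N, 0 < w y) ∧ z = ∑ y ∈ N, w y • v y := by
  obtain ⟨c, hcT, rfl⟩ := (Finsupp.mem_span_image_iff_linearCombination NNReal).1 hz
  refine ⟨c.support, hcT, fun y => c y, fun y hy => ?_, rfl⟩
  exact lt_of_le_of_ne (c y).2 (Ne.symm (by simpa using hy))

end PointedCone

theorem Module.Dual.exists_eq_sum_of_nonneg {V X : Type*} [AddCommGroup V] [Module ℝ V]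
    [FiniteDimensional ℝ V] [TopologicalSpace X] {T : Set X} (hT : IsCompact T)
    (ev : X → Module.Dual ℝ V) (hev : ∀ p, Continuous fun y => ev y p) (q : V)
    (hq : ∀ y ∈ T, ev y q = 1) (L : Module.Dual ℝ V)
    (hL : ∀ p, (∀ y ∈ T, 0 ≤ ev y p) → 0 ≤ L p) :
    ∃ N : Finset X, ↑N ⊆ T ∧ ∃ w : X → ℝ, (∀ y ∈ N, 0 < w y) ∧
      ∀ p, L p = ∑ y ∈ N, w y * ev y p := by
  -- `Module.Dual ℝ V` carries no topology, so separate in the coordinates `φ ↦ (φ (B i))ᵢ`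
  let B := Module.finBasis ℝ V
  let M := B.dualBasis.equivFun
  have hM (φ : Module.Dual ℝ V) (i) : M φ i = φ (B i) := B.dualBasis_equivFun φ i
  have hrep (f : (Fin (Module.finrank ℝ V) → ℝ) →ₗ[ℝ] ℝ) : ∃ p : V, ∀ φ, f (M φ) = φ p :=
    ⟨(Module.evalEquiv ℝ V).symm (f ∘ₗ M.toLinearMap), fun φ => by simp⟩
  have hK : IsCompact ((M ∘ ev) '' T) :=
    hT.image (continuous_pi fun i => by simpa only [comp_apply, hM] using hev (B i))
  let g := LinearMap.toContinuousLinearMap (Module.Dual.eval ℝ V q ∘ₗ M.symm.toLinearMap)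
  have hg : ∀ x ∈ (M ∘ ev) '' T, g x = 1 := by
    rintro _ ⟨y, hy, rfl⟩
    simpa [g] using hq y hy
  have hLK : ∀ f : StrongDual ℝ _, (∀ x ∈ (M ∘ ev) '' T, 0 ≤ f x) → 0 ≤ f (M L) := by
    intro f hf
    obtain ⟨p, hp⟩ := hrep f.toLinearMap
    simp only [ContinuousLinearMap.coe_coe] at hp
    rw [hp]
    exact hL p fun y hy => hp (ev y) ▸ hf _ ⟨y, hy, rfl⟩
  obtain ⟨N, hNT, w, hw, hLw⟩ := PointedCone.exists_finset_of_mem_hull_image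
    (PointedCone.mem_hull_of_forall_nonneg hK g hg hLK)
  refine ⟨N, hNT, w, hw, fun p => ?_⟩
  have hLN : L = ∑ y ∈ N, w y • ev y := M.injective (by simpa using hLw)
  simp [hLN]

theorem eNorm_eq_norm {n : ℕ} (x : Fin n → ℝ) :
    eNorm x = ‖(EuclideanSpace.equiv (Fin n) ℝ).symm x‖ := by
  simp [eNorm, EuclideanSpace.norm_eq]

theorem isCompact_setOf_eNorm_eq_one (n : ℕ) : IsCompact {x : Fin n → ℝ | eNorm x = 1} := by
  have : {x : Fin n → ℝ | eNorm x = 1} =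
      (EuclideanSpace.equiv (Fin n) ℝ).symm ⁻¹' Metric.sphere 0 1 := by
    ext x
    simp [eNorm_eq_norm]
  rw [this]
  exact (EuclideanSpace.equiv (Fin n) ℝ).symm.toHomeomorph.isCompact_preimage.2
    (isCompact_sphere 0 1)

theorem stmt_0_general (n d : ℕ)
    (S : Set (Fin n → ℝ)) (hS : ∀ y ∈ S, eNorm y = 1)
    (L : Module.Dual ℝ (MvPolynomial.homogeneousSubmodule (Fin n) ℝ (2 * d)))
    (hL : ∀ p : MvPolynomial.homogeneousSubmodule (Fin n) ℝ (2 * d),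
      (∀ y ∈ S, 0 ≤ eval y (p : MvPolynomial (Fin n) ℝ)) → 0 ≤ L p) :
    ∃ (N : Finset (Fin n → ℝ)) (w : (Fin n → ℝ) → ℝ),
      (↑N : Set (Fin n → ℝ)) ⊆ closure S ∧ (∀ y ∈ N, 0 < w y) ∧
      ∀ p : MvPolynomial.homogeneousSubmodule (Fin n) ℝ (2 * d),
        L p = ∑ y ∈ N, w y * eval y (p : MvPolynomial (Fin n) ℝ) := by
  have : FiniteDimensional ℝ (homogeneousSubmodule (Fin n) ℝ (2 * d)) :=
    Module.Finite.iff_fg.2 (homogeneousSubmodule_fg (Fin n) ℝ (2 * d))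
  have hT : closure S ⊆ {y | eNorm y = 1} :=
    closure_minimal hS (isCompact_setOf_eNorm_eq_one n).isClosed
  let ev (y : Fin n → ℝ) : Module.Dual ℝ (homogeneousSubmodule (Fin n) ℝ (2 * d)) :=
    (aeval y).toLinearMap ∘ₗ Submodule.subtype _
  have hev (y : Fin n → ℝ) (p) : ev y p = eval y (p : MvPolynomial (Fin n) ℝ) := by
    simp [ev]
  let q : homogeneousSubmodule (Fin n) ℝ (2 * d) :=
    ⟨(∑ i, X i ^ 2) ^ d, (IsHomogeneous.sum _ _ 2 fun i _ => isHomogeneous_X_pow i 2).pow d⟩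
  obtain ⟨N, hN, w, hw, hLw⟩ := Module.Dual.exists_eq_sum_of_nonneg
    ((isCompact_setOf_eNorm_eq_one n).of_isClosed_subset isClosed_closure hT) ev
    (fun p => by simpa only [hev] using continuous_eval (p : MvPolynomial (Fin n) ℝ)) q
    (fun y hy => by simp [hev, q, Real.sqrt_eq_one.1 (hT hy)]) L
    (fun p hp => hL p fun y hy => hev y p ▸ hp y (subset_closure hy))
  exact ⟨N, w, hN, hw, fun p => by simpa only [hev] using hLw p⟩

/-- Lemma `exhqr`: every linear functional on the space of homogeneous forms of degree `2d`
that is nonnegative on all forms nonnegative on `S ⊆ S^{n-1}` is given by a quadrature rule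
with positive weights and all nodes in the closure of `S`. -/
theorem stmt_0 (n d : ℕ) (hn : 0 < n) (hd : 0 < d)
    (S : Set (Fin n → ℝ)) (hS : ∀ y ∈ S, eNorm y = 1)
    (L : Module.Dual ℝ (MvPolynomial.homogeneousSubmodule (Fin n) ℝ (2 * d)))
    (hL : ∀ p : MvPolynomial.homogeneousSubmodule (Fin n) ℝ (2 * d),
      (∀ y ∈ S, 0 ≤ eval y (p : MvPolynomial (Fin n) ℝ)) → 0 ≤ L p) :
    ∃ (N : Finset (Fin n → ℝ)) (w : (Fin n → ℝ) → ℝ),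
      (↑N : Set (Fin n → ℝ)) ⊆ closure S ∧ (∀ y ∈ N, 0 < w y) ∧
      ∀ p : MvPolynomial.homogeneousSubmodule (Fin n) ℝ (2 * d),
        L p = ∑ y ∈ N, w y * eval y (p : MvPolynomial (Fin n) ℝ) :=
  stmt_0_general n d S hS L hL

end
end

section
/- Let n, d be positive integers and let S ⊆ ℝⁿ be closed. A polynomial f ∈ ℝ[X₁,…,Xₙ]_{2d} lies in the interior of P_{2d}(S) (with respect to the unique vector space topology on the finite-dimensional space ℝ[X₁,…,Xₙ]_{2d}) if and only if f(x) > 0 for all x ∈ S and f_{2d}(y) > 0 for all y ∈ S_∞. -/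
open MvPolynomial

noncomputable section

/-- The infinite reach `S_∞` of a set `S ⊆ ℝⁿ`. -/
def infReach {n : ℕ} (S : Set (Fin n → ℝ)) : Set (Fin n → ℝ) :=
  {y | eNorm y = 1 ∧ ∃ x : ℕ → (Fin n → ℝ), (∀ k, x k ∈ S) ∧
    Filter.Tendsto (fun k => eNorm (x k)) Filter.atTop Filter.atTop ∧
    Filter.Tendsto (fun k => (eNorm (x k))⁻¹ • x k) Filter.atTop (nhds y)}

/-- The space `ℝ[X₁,…,Xₙ]_m` of polynomials of total degree at most `m`. -/
def PolyLE (n m : ℕ) : Submodule ℝ (MvPolynomial (Fin n) ℝ) :=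
  MvPolynomial.restrictTotalDegree (Fin n) ℝ m

/-- The unique vector space topology on the finite-dimensional space `ℝ[X₁,…,Xₙ]_m`,
realized as the topology of coefficientwise convergence. -/
instance polyTop (n m : ℕ) : TopologicalSpace (PolyLE n m) :=
  TopologicalSpace.induced
    (fun p (s : Fin n →₀ ℕ) => MvPolynomial.coeff s (p : MvPolynomial (Fin n) ℝ))
    Pi.topologicalSpace

/-- The cone `P_m(S)` of polynomials of degree at most `m` nonnegative on `S`. -/
def Pcone (n m : ℕ) (S : Set (Fin n → ℝ)) : Set (PolyLE n m) :=
  {p | ∀ x ∈ S, 0 ≤ eval x (p : MvPolynomial (Fin n) ℝ)}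

/-!
Both conditions are equivalent to a uniform bound `ε (1 + ‖x‖²)^d ≤ f x` on `S` with `ε > 0`.
If `f` is interior, `f - ε (1 + ‖X‖²)^d` stays in the cone for small `ε`; conversely, moving the
finitely many coefficients of `f` by at most `δ` changes `f x` by at most `C δ (1 + ‖x‖²)^d`,
where `C` counts the monomials of degree at most `2d`.
The bound gives positivity on `S`, and, dividing by `(1 + ‖x‖²)^d` along a sequence of `S`
escaping in direction `y`, positivity of `f_{2d} y`: the lower homogeneous components are damped
by powers of `‖x‖⁻¹`. Conversely, positivity yields the bound on the bounded part of `S` by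
compactness, and outside a large ball by extracting a convergent subsequence of directions.
-/

open Filter Topology Finset

section eNorm

variable {n : ℕ}

lemma eNorm_eq_norm_toLp (x : Fin n → ℝ) : eNorm x = ‖WithLp.toLp 2 x‖ := by
  simp [eNorm, EuclideanSpace.norm_eq]

lemma eNorm_nonneg (x : Fin n → ℝ) : 0 ≤ eNorm x := Real.sqrt_nonneg _

lemma sq_eNorm (x : Fin n → ℝ) : eNorm x ^ 2 = ∑ i, x i ^ 2 :=
  Real.sq_sqrt (by positivity)

lemma continuous_eNorm : Continuous (eNorm (n := n)) := by
  unfold eNorm; fun_prop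

lemma eNorm_smul (c : ℝ) (x : Fin n → ℝ) : eNorm (c • x) = |c| * eNorm x := by
  simp only [eNorm_eq_norm_toLp, WithLp.toLp_smul, norm_smul, Real.norm_eq_abs]

lemma eNorm_inv_smul_self_le_one (x : Fin n → ℝ) : eNorm ((eNorm x)⁻¹ • x) ≤ 1 := by
  rw [eNorm_smul, abs_inv, abs_of_nonneg (eNorm_nonneg x)]
  exact inv_mul_le_one_of_le₀ le_rfl (eNorm_nonneg x)

lemma eNorm_inv_smul_self {x : Fin n → ℝ} (hx : eNorm x ≠ 0) : eNorm ((eNorm x)⁻¹ • x) = 1 := by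
  rw [eNorm_smul, abs_inv, abs_of_nonneg (eNorm_nonneg x), inv_mul_cancel₀ hx]

lemma norm_le_eNorm (x : Fin n → ℝ) : ‖x‖ ≤ eNorm x :=
  (pi_norm_le_iff_of_nonneg (eNorm_nonneg x)).2 fun i => by
    rw [eNorm_eq_norm_toLp]; exact PiLp.norm_apply_le (WithLp.toLp 2 x) i

lemma abs_le_eNorm (x : Fin n → ℝ) (i : Fin n) : |x i| ≤ eNorm x :=
  (norm_le_pi_norm x i).trans (norm_le_eNorm x)

end eNorm

lemma sum_homogeneousComponent_of_totalDegree_le {σ R : Type*} [CommSemiring R]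
    {p : MvPolynomial σ R} {N : ℕ} (hp : p.totalDegree ≤ N) :
    ∑ j ∈ range (N + 1), homogeneousComponent j p = p := by
  conv_rhs => rw [← sum_homogeneousComponent p]
  refine (Finset.sum_subset (range_subset_range.2 (by omega)) fun j hj hj' => ?_).symm
  exact homogeneousComponent_eq_zero _ _ (by simp at hj'; omega)

section Asymptotics

variable {σ : Type*} [Fintype σ]

lemma eval_smul_of_isHomogeneous {R : Type*} [CommSemiring R] {p : MvPolynomial σ R} {j : ℕ}
    (hp : p.IsHomogeneous j) (r : R) (u : σ → R) : eval (r • u) p = r ^ j * eval u p := by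
  rw [eval_eq', eval_eq', Finset.mul_sum]
  refine Finset.sum_congr rfl fun m hm => ?_
  have hdeg : ∑ i, m i = j := by
    rw [← Finsupp.degree_eq_sum, Finsupp.degree_eq_weight_one]
    exact hp (mem_support_iff.mp hm)
  simp only [Pi.smul_apply, smul_eq_mul, mul_pow, Finset.prod_mul_distrib,
    Finset.prod_pow_eq_pow_sum, hdeg]
  ring

lemma tendsto_eval_smul_div_pow {p : MvPolynomial σ ℝ} {N : ℕ} (hp : p.totalDegree ≤ N)
    {r : ℕ → ℝ} {u : ℕ → σ → ℝ} {y : σ → ℝ} (hr : Tendsto r atTop atTop)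
    (hu : Tendsto u atTop (𝓝 y)) :
    Tendsto (fun k => eval (r k • u k) p / r k ^ N) atTop
      (𝓝 (eval y (homogeneousComponent N p))) := by
  have hexpand : ∀ᶠ k in atTop, eval (r k • u k) p / r k ^ N
      = ∑ j ∈ range (N + 1), (r k)⁻¹ ^ (N - j) * eval (u k) (homogeneousComponent j p) := by
    filter_upwards [hr.eventually_ne_atTop 0] with k hk
    conv_lhs => rw [← sum_homogeneousComponent_of_totalDegree_le hp]
    rw [map_sum, Finset.sum_div]
    refine Finset.sum_congr rfl fun j hj => ?_
    rw [eval_smul_of_isHomogeneous (homogeneousComponent_isHomogeneous j p),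
      inv_pow_sub₀ hk (by simpa [Nat.lt_succ_iff] using hj)]
    ring
  have hlimit : ∑ j ∈ range (N + 1), (0 : ℝ) ^ (N - j) * eval y (homogeneousComponent j p)
      = eval y (homogeneousComponent N p) := by
    rw [Finset.sum_eq_single N (fun j hj hjN => by
      rw [zero_pow (by simp at hj; omega), zero_mul]) (by simp)]
    simp
  rw [← hlimit]
  refine Tendsto.congr' (EventuallyEq.symm hexpand) (tendsto_finsetSum _ fun j _ => ?_)
  exact ((tendsto_inv_atTop_zero.comp hr).pow _).mul
    (((continuous_eval _).tendsto y).comp hu)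

end Asymptotics

section InfiniteReach

variable {n d : ℕ}

lemma tendsto_eval_div_weight {p : MvPolynomial (Fin n) ℝ} (hp : p.totalDegree ≤ 2 * d)
    {x : ℕ → Fin n → ℝ} {y : Fin n → ℝ} (hx : Tendsto (fun k => eNorm (x k)) atTop atTop)
    (hxy : Tendsto (fun k => (eNorm (x k))⁻¹ • x k) atTop (𝓝 y)) :
    Tendsto (fun k => eval (x k) p / (1 + eNorm (x k) ^ 2) ^ d) atTop
      (𝓝 (eval y (homogeneousComponent (2 * d) p))) := by
  have hweight : Tendsto (fun k => ((eNorm (x k))⁻¹ ^ 2 + 1) ^ d) atTop (𝓝 1) := by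
    simpa using (((tendsto_inv_atTop_zero.comp hx).pow 2).add_const 1).pow d
  have h := (tendsto_eval_smul_div_pow hp hx hxy).div hweight one_ne_zero
  rw [div_one] at h
  refine h.congr' ?_
  filter_upwards [hx.eventually_ne_atTop 0] with k hk
  rw [Pi.div_apply, smul_inv_smul₀ hk, div_div, pow_mul, ← mul_pow, mul_add, ← mul_pow,
    mul_inv_cancel₀ hk, one_pow, mul_one]

lemma exists_mem_infReach_subseq {S : Set (Fin n → ℝ)} {x : ℕ → Fin n → ℝ} (hxS : ∀ k, x k ∈ S)
    (hx : Tendsto (fun k => eNorm (x k)) atTop atTop) :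
    ∃ y ∈ infReach S, ∃ φ : ℕ → ℕ, StrictMono φ ∧
      Tendsto (fun k => (eNorm (x (φ k)))⁻¹ • x (φ k)) atTop (𝓝 y) := by
  have hbdd : ∀ k, (eNorm (x k))⁻¹ • x k ∈ Metric.closedBall (0 : Fin n → ℝ) 1 := fun k => by
    rw [mem_closedBall_zero_iff]
    exact (norm_le_eNorm _).trans (eNorm_inv_smul_self_le_one _)
  obtain ⟨y, -, φ, hφ, hy⟩ := tendsto_subseq_of_bounded Metric.isBounded_closedBall hbdd
  have hxφ := hx.comp hφ.tendsto_atTop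
  have hy1 : eNorm y = 1 := by
    refine tendsto_nhds_unique ((continuous_eNorm.tendsto y).comp hy) (tendsto_const_nhds.congr' ?_)
    filter_upwards [hxφ.eventually_ne_atTop 0] with k hk
    exact (eNorm_inv_smul_self hk).symm
  exact ⟨y, ⟨hy1, x ∘ φ, fun k => hxS _, hxφ, hy⟩, φ, hφ, hy⟩

end InfiniteReach

section WeightedPositivity

variable {n d : ℕ} {S : Set (Fin n → ℝ)} {p : MvPolynomial (Fin n) ℝ}

lemma exists_mul_weight_le_of_le_eNorm (hp : p.totalDegree ≤ 2 * d)
    (hpos : ∀ y ∈ infReach S, 0 < eval y (homogeneousComponent (2 * d) p)) :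
    ∃ R, ∃ ε > 0, ∀ x ∈ S, R ≤ eNorm x → ε * (1 + eNorm x ^ 2) ^ d ≤ eval x p := by
  by_contra! h
  choose x hxS hxR hxε using fun k : ℕ => h k (1 / (k + 1)) (by positivity)
  have hx : Tendsto (fun k => eNorm (x k)) atTop atTop :=
    tendsto_atTop_mono hxR tendsto_natCast_atTop_atTop
  obtain ⟨y, hy, φ, hφ, hxy⟩ := exists_mem_infReach_subseq hxS hx
  have hbound : ∀ k, eval (x (φ k)) p / (1 + eNorm (x (φ k)) ^ 2) ^ d ≤ 1 / (φ k + 1 : ℝ) :=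
    fun k => (div_le_iff₀ (by positivity)).2 (hxε (φ k)).le
  have hle := le_of_tendsto_of_tendsto' (tendsto_eval_div_weight hp (hx.comp hφ.tendsto_atTop) hxy)
    (tendsto_one_div_add_atTop_nhds_zero_nat.comp hφ.tendsto_atTop) hbound
  exact (hpos y hy).not_ge hle

lemma exists_mul_weight_le_of_eNorm_le (hS : IsClosed S) (hpos : ∀ x ∈ S, 0 < eval x p) (R : ℝ) :
    ∃ ε > 0, ∀ x ∈ S, eNorm x ≤ R → ε * (1 + eNorm x ^ 2) ^ d ≤ eval x p := by
  have hK : IsCompact (S ∩ {x | eNorm x ≤ R}) := by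
    refine Metric.isCompact_of_isClosed_isBounded
      (hS.inter (isClosed_le continuous_eNorm continuous_const))
      ((Metric.isBounded_closedBall (x := 0) (r := R)).subset fun x hx => ?_)
    exact mem_closedBall_zero_iff.2 ((norm_le_eNorm x).trans hx.2)
  have hcont : Continuous fun x => eval x p / (1 + eNorm x ^ 2) ^ d :=
    (continuous_eval p).div ((continuous_const.add (continuous_eNorm.pow 2)).pow d)
      fun x => by positivity
  obtain ⟨ε, hε, hεK⟩ := hK.exists_forall_le' hcont.continuousOn
    (a := 0) fun x hx => div_pos (hpos x hx.1) (by positivity)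
  exact ⟨ε, hε, fun x hx hxR => (le_div_iff₀ (by positivity)).1 (hεK x ⟨hx, hxR⟩)⟩

theorem exists_mul_weight_le_iff (hS : IsClosed S) (hp : p.totalDegree ≤ 2 * d) :
    (∃ ε > 0, ∀ x ∈ S, ε * (1 + eNorm x ^ 2) ^ d ≤ eval x p) ↔
      (∀ x ∈ S, 0 < eval x p) ∧ ∀ y ∈ infReach S, 0 < eval y (homogeneousComponent (2 * d) p) := by
  constructor
  · rintro ⟨ε, hε, hεS⟩
    refine ⟨fun x hx => (by positivity : 0 < ε * _).trans_le (hεS x hx), ?_⟩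
    rintro y ⟨-, x, hxS, hx, hxy⟩
    refine hε.trans_le (ge_of_tendsto (tendsto_eval_div_weight hp hx hxy) (Eventually.of_forall
      fun k => ?_))
    exact (le_div_iff₀ (by positivity)).2 (hεS _ (hxS k))
  · rintro ⟨hposS, hposInf⟩
    obtain ⟨R, ε₁, hε₁, hfar⟩ := exists_mul_weight_le_of_le_eNorm hp hposInf
    obtain ⟨ε₂, hε₂, hnear⟩ := exists_mul_weight_le_of_eNorm_le (d := d) hS hposS R
    refine ⟨min ε₁ ε₂, lt_min hε₁ hε₂, fun x hx => ?_⟩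
    rcases le_total R (eNorm x) with hxR | hxR
    · exact (mul_le_mul_of_nonneg_right (min_le_left _ _) (by positivity)).trans (hfar x hx hxR)
    · exact (mul_le_mul_of_nonneg_right (min_le_right _ _) (by positivity)).trans (hnear x hx hxR)

end WeightedPositivity

section PolyLE

variable {n d N : ℕ}

lemma totalDegree_le_of_mem_PolyLE (p : PolyLE n N) :
    (p : MvPolynomial (Fin n) ℝ).totalDegree ≤ N :=
  (mem_restrictTotalDegree _ _ _).1 p.2

lemma continuous_coeff_PolyLE (m : Fin n →₀ ℕ) :
    Continuous fun p : PolyLE n N => coeff m (p : MvPolynomial (Fin n) ℝ) :=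
  (continuous_apply m).comp continuous_induced_dom

lemma continuous_sub_smul_PolyLE (f q : PolyLE n N) : Continuous fun t : ℝ => f - t • q := by
  refine continuous_induced_rng.2 (continuous_pi fun m => ?_)
  change Continuous fun t : ℝ => coeff m ((f - t • q : PolyLE n N) : MvPolynomial (Fin n) ℝ)
  simp only [Submodule.coe_sub, Submodule.coe_smul, coeff_sub, coeff_smul, smul_eq_mul]
  fun_prop

def weightPoly (n d : ℕ) : PolyLE n (2 * d) :=
  ⟨(1 + ∑ i, X i ^ 2) ^ d, (mem_restrictTotalDegree _ _ _).2 <| by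
    refine (totalDegree_pow _ _).trans ?_
    rw [mul_comm]
    refine Nat.mul_le_mul_right _ ((totalDegree_add _ _).trans (max_le (by simp) ?_))
    refine (totalDegree_finsetSum _ _).trans (Finset.sup_le fun i _ => ?_)
    exact (totalDegree_pow _ _).trans (by simp)⟩

lemma eval_weightPoly (x : Fin n → ℝ) :
    eval x (weightPoly n d : MvPolynomial (Fin n) ℝ) = (1 + eNorm x ^ 2) ^ d := by
  simp [weightPoly, sq_eNorm]

def monomialsLE (n N : ℕ) : Finset (Fin n →₀ ℕ) := (Finsupp.finite_of_degree_le N).toFinset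

lemma mem_monomialsLE {m : Fin n →₀ ℕ} : m ∈ monomialsLE n N ↔ m.degree ≤ N :=
  Set.Finite.mem_toFinset _

lemma abs_prod_pow_le_weight (x : Fin n → ℝ) {m : Fin n →₀ ℕ} (hm : m.degree ≤ 2 * d) :
    |∏ i, x i ^ m i| ≤ (1 + eNorm x ^ 2) ^ d := by
  obtain ⟨M, hM1, hxM, hM⟩ : ∃ M : ℝ, 1 ≤ M ∧ eNorm x ≤ M ∧ M ^ 2 ≤ 1 + eNorm x ^ 2 := by
    rcases le_total 1 (eNorm x) with h | h
    · exact ⟨eNorm x, h, le_rfl, by linarith⟩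
    · exact ⟨1, le_rfl, h, by nlinarith [eNorm_nonneg x]⟩
  calc |∏ i, x i ^ m i| = ∏ i, |x i| ^ m i := by simp [Finset.abs_prod, abs_pow]
    _ ≤ ∏ i, M ^ m i := Finset.prod_le_prod (fun i _ => by positivity)
        fun i _ => pow_le_pow_left₀ (abs_nonneg _) ((abs_le_eNorm x i).trans hxM) _
    _ = M ^ m.degree := by rw [Finset.prod_pow_eq_pow_sum, Finsupp.degree_eq_sum]
    _ ≤ M ^ (2 * d) := pow_le_pow_right₀ hM1 hm
    _ ≤ (1 + eNorm x ^ 2) ^ d := by rw [pow_mul]; exact pow_le_pow_left₀ (by positivity) hM d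

lemma abs_eval_le_of_abs_coeff_le {p : MvPolynomial (Fin n) ℝ} (hp : p.totalDegree ≤ 2 * d)
    {δ : ℝ} (hδ : ∀ m ∈ monomialsLE n (2 * d), |coeff m p| ≤ δ) (x : Fin n → ℝ) :
    |eval x p| ≤ (#(monomialsLE n (2 * d)) : ℝ) * δ * (1 + eNorm x ^ 2) ^ d := by
  have hsupp : p.support ⊆ monomialsLE n (2 * d) := fun m hm =>
    mem_monomialsLE.2 ((le_totalDegree hm).trans hp)
  rw [eval_eq', Finset.sum_subset hsupp fun m _ hm => by rw [notMem_support_iff.1 hm, zero_mul]]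
  calc |∑ m ∈ monomialsLE n (2 * d), coeff m p * ∏ i, x i ^ m i|
      ≤ ∑ m ∈ monomialsLE n (2 * d), |coeff m p * ∏ i, x i ^ m i| := abs_sum_le_sum_abs _ _
    _ ≤ ∑ m ∈ monomialsLE n (2 * d), δ * (1 + eNorm x ^ 2) ^ d :=
        Finset.sum_le_sum fun m hm => by
          rw [abs_mul]
          exact mul_le_mul (hδ m hm) (abs_prod_pow_le_weight x (mem_monomialsLE.1 hm))
            (abs_nonneg _) ((abs_nonneg _).trans (hδ m hm))
    _ = (#(monomialsLE n (2 * d)) : ℝ) * δ * (1 + eNorm x ^ 2) ^ d := by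
        rw [Finset.sum_const, nsmul_eq_mul, mul_assoc]

lemma eventually_abs_eval_sub_le (f : PolyLE n (2 * d)) {ε : ℝ} (hε : 0 < ε) :
    ∀ᶠ g : PolyLE n (2 * d) in 𝓝 f, ∀ x,
      |eval x (g : MvPolynomial (Fin n) ℝ) - eval x (f : MvPolynomial (Fin n) ℝ)|
        ≤ ε * (1 + eNorm x ^ 2) ^ d := by
  set C : ℝ := ↑(#(monomialsLE n (2 * d)))
  have hδ : 0 < ε / (C + 1) := by positivity
  have hcoeff : ∀ᶠ g : PolyLE n (2 * d) in 𝓝 f, ∀ m ∈ monomialsLE n (2 * d),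
      |coeff m (g : MvPolynomial (Fin n) ℝ) - coeff m (f : MvPolynomial (Fin n) ℝ)| < ε / (C + 1) :=
    (eventually_all_finset _).2 fun m _ =>
      (continuous_coeff_PolyLE m).continuousAt.eventually (Metric.ball_mem_nhds _ hδ)
  filter_upwards [hcoeff] with g hg x
  have h := abs_eval_le_of_abs_coeff_le (totalDegree_le_of_mem_PolyLE (g - f))
    (δ := ε / (C + 1)) (fun m hm => by simpa using (hg m hm).le) x
  rw [Submodule.coe_sub, map_sub] at h
  refine h.trans (mul_le_mul_of_nonneg_right ?_ (by positivity))
  rw [mul_div_assoc', div_le_iff₀ (by positivity)]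
  nlinarith

theorem mem_interior_Pcone_iff {S : Set (Fin n → ℝ)} {f : PolyLE n (2 * d)} :
    f ∈ interior (Pcone n (2 * d) S) ↔
      ∃ ε > 0, ∀ x ∈ S, ε * (1 + eNorm x ^ 2) ^ d ≤ eval x (f : MvPolynomial (Fin n) ℝ) := by
  rw [mem_interior_iff_mem_nhds]
  constructor
  · intro hf
    have hcurve : Tendsto (fun t : ℝ => f - t • weightPoly n d) (𝓝[>] 0) (𝓝 f) := by
      simpa using ((continuous_sub_smul_PolyLE f (weightPoly n d)).tendsto 0).mono_left
        nhdsWithin_le_nhds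
    obtain ⟨ε, hεP, hε⟩ := ((hcurve.eventually hf).and self_mem_nhdsWithin).exists
    refine ⟨ε, hε, fun x hx => ?_⟩
    have := hεP x hx
    rw [Submodule.coe_sub, Submodule.coe_smul, map_sub, smul_eval, eval_weightPoly] at this
    linarith
  · rintro ⟨ε, hε, hεS⟩
    filter_upwards [eventually_abs_eval_sub_le f hε] with g hg x hx
    linarith [(abs_le.1 (hg x)).1, hεS x hx]

end PolyLE

theorem stmt_2_general (n d : ℕ) (S : Set (Fin n → ℝ))
    (hScl : IsClosed S) (f : PolyLE n (2 * d)) :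
    f ∈ interior (Pcone n (2 * d) S) ↔
      (∀ x ∈ S, 0 < eval x (f : MvPolynomial (Fin n) ℝ)) ∧
      (∀ y ∈ infReach S,
        0 < eval y (MvPolynomial.homogeneousComponent (2 * d) (f : MvPolynomial (Fin n) ℝ))) := by
  rw [mem_interior_Pcone_iff]
  exact exists_mul_weight_le_iff hScl (totalDegree_le_of_mem_PolyLE f)

/-- Proposition `innerer`: for closed `S ⊆ ℝⁿ`, a polynomial `f` of degree at most `2d`
lies in the interior of `P_{2d}(S)` iff `f > 0` on `S` and `f_{2d} > 0` on `S_∞`. -/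
theorem stmt_2 (n d : ℕ) (hn : 0 < n) (hd : 0 < d) (S : Set (Fin n → ℝ))
    (hScl : IsClosed S) (f : PolyLE n (2 * d)) :
    f ∈ interior (Pcone n (2 * d) S) ↔
      (∀ x ∈ S, 0 < eval x (f : MvPolynomial (Fin n) ℝ)) ∧
      (∀ y ∈ infReach S,
        0 < eval y (MvPolynomial.homogeneousComponent (2 * d) (f : MvPolynomial (Fin n) ℝ))) :=
  stmt_2_general n d S hScl f

end
end

section
/- Let n, d be positive integers and S ⊆ ℝⁿ. The linear span of the cone P_{2d}(S)* in the dual space of ℝ[X₁,…,Xₙ]_{2d} equals the set of linear functionals L on ℝ[X₁,…,Xₙ]_{2d} such that L(p) = 0 for every polynomial p ∈ ℝ[X₁,…,Xₙ]_{2d} that vanishes at every point of S. -/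
open MvPolynomial

noncomputable section

/-- The dual cone `P_m(S)*`. -/
def PconeDual (n m : ℕ) (S : Set (Fin n → ℝ)) : Set (Module.Dual ℝ (PolyLE n m)) :=
  {L | ∀ p ∈ Pcone n m S, 0 ≤ L p}

set_option synthInstance.maxHeartbeats 1000000 in
set_option maxHeartbeats 2000000 in
/-- Proposition `hull`: the linear span of `P_{2d}(S)*` equals the space of linear functionals
vanishing on all polynomials of degree at most `2d` that vanish identically on `S`. -/
theorem stmt_4 (n d : ℕ) (hn : 0 < n) (hd : 0 < d) (S : Set (Fin n → ℝ)) :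
    (Submodule.span ℝ (PconeDual n (2 * d) S) :
        Set (Module.Dual ℝ (PolyLE n (2 * d)))) =
      {L : Module.Dual ℝ (PolyLE n (2 * d)) |
        ∀ p : PolyLE n (2 * d),
          (∀ x ∈ S, eval x (p : MvPolynomial (Fin n) ℝ) = 0) → L p = 0} := by
  classical
  set V := PolyLE n (2 * d)
  haveI : Module.Finite ℝ V :=
    inferInstanceAs (Module.Finite ℝ (MvPolynomial.restrictTotalDegree (Fin n) ℝ (2 * d)))
  haveI : Module.IsReflexive ℝ V := inferInstance
  ext L
  simp only [SetLike.mem_coe, Set.mem_setOf_eq]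
  constructor
  · intro hL p hp
    induction hL using Submodule.span_induction with
    | mem M hM =>
        have h1 : p ∈ Pcone n (2 * d) S := fun x hx => by rw [hp x hx]
        have h2 : (-p) ∈ Pcone n (2 * d) S := fun x hx => by
          push_cast
          rw [map_neg, hp x hx, neg_zero]
        have := hM p h1
        have := hM (-p) h2
        rw [map_neg] at this
        linarith
    | zero => simp
    | add M N _ _ hM hN => simp [hM, hN]
    | smul c M _ hM => simp [hM]
  · intro hL
    by_contra hmem
    -- separate L from the span
    set W := Submodule.span ℝ (PconeDual n (2 * d) S)
    have hq : Submodule.Quotient.mk (p := W) L ≠ 0 := by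
      simpa [Submodule.Quotient.mk_eq_zero] using hmem
    have hψ : ∃ g : Module.Dual ℝ (Module.Dual ℝ V ⧸ W),
        g (Submodule.Quotient.mk L) ≠ 0 := by
      by_contra h
      push_neg at h
      exact hq ((Module.forall_dual_apply_eq_zero_iff ℝ _).mp h)
    obtain ⟨g, hg⟩ := hψ
    set ψ : Module.Dual ℝ (Module.Dual ℝ V) := g ∘ₗ W.mkQ
    have hψW : ∀ M ∈ W, ψ M = 0 := by
      intro M hM
      simp [ψ, (Submodule.Quotient.mk_eq_zero W).mpr hM]
    set p : V := (Module.evalEquiv ℝ V).symm ψ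
    have hpeval : ∀ M : Module.Dual ℝ V, M p = ψ M := fun M =>
      Module.apply_evalEquiv_symm_apply ℝ V M ψ
    have hvanish : ∀ x ∈ S, eval x (p : MvPolynomial (Fin n) ℝ) = 0 := by
      intro x hx
      -- evaluation at x as a dual element
      set E : Module.Dual ℝ V :=
        (MvPolynomial.aeval x).toLinearMap ∘ₗ V.subtype
      have hE : E ∈ PconeDual n (2 * d) S := by
        intro q hq
        simpa [E] using hq x hx
      have : E p = 0 := by
        rw [hpeval]
        exact hψW E (Submodule.subset_span hE)
      simpa [E] using this
    have := hL p hvanish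
    rw [hpeval L] at this
    exact hg (by simpa [ψ] using this)

end
end

section
/- Let n, d be positive integers and S ⊆ ℝⁿ. Then the closure of the truncated moment cone M_{2d}(S) in the dual space of ℝ[X₁,…,Xₙ]_{2d} (with its unique vector space topology) equals P_{2d}(S)*. -/
/-
A measure supported in `S` integrates a polynomial nonnegative on `S` to a nonnegative number,
and `P_m(S)*` is closed, so it contains the closure of `M_m(S)`. Conversely `M_m(S)` is a convex
cone containing the point evaluations at `S`. If `L ∈ P_m(S)*` were outside its closure, Farkas'
lemma would give a functional on the dual, nonnegative on `M_m(S)` and negative at `L`. By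
reflexivity of the finite-dimensional space `ℝ[X]_m` that functional is evaluation at some
polynomial `p`; testing on point evaluations gives `p ∈ P_m(S)`, contradicting `L p < 0`.
-/

open MvPolynomial MeasureTheory

noncomputable section

/-- `μ` has support contained in `S`. -/
def SupportIn {α : Type*} [TopologicalSpace α] [MeasurableSpace α]
    (μ : Measure α) (S : Set α) : Prop :=
  ∀ x ∉ S, ∃ U : Set α, IsOpen U ∧ x ∈ U ∧ μ U = 0

/-- The truncated moment cone `M_m(S)`. -/
def MomentCone (n m : ℕ) (S : Set (Fin n → ℝ)) : Set (Module.Dual ℝ (PolyLE n m)) :=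
  {L | ∃ μ : Measure (Fin n → ℝ), SupportIn μ S ∧
    (∀ p : MvPolynomial (Fin n) ℝ, p.totalDegree ≤ m → Integrable (fun x => eval x p) μ) ∧
    ∀ p : PolyLE n m, L p = ∫ x, eval x (p : MvPolynomial (Fin n) ℝ) ∂μ}

/-- The unique vector space topology on the finite-dimensional dual of `ℝ[X₁,…,Xₙ]_m`,
realized as the topology of pointwise convergence. -/
instance dualTop (n m : ℕ) : TopologicalSpace (Module.Dual ℝ (PolyLE n m)) :=
  TopologicalSpace.induced (fun L => (⇑L : PolyLE n m → ℝ)) Pi.topologicalSpace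

instance (n m : ℕ) : Module.Finite ℝ (PolyLE n m) :=
  inferInstanceAs (Module.Finite ℝ (restrictTotalDegree (Fin n) ℝ m))

section DualTopology

variable (n m : ℕ)

theorem continuous_dual_apply (p : PolyLE n m) :
    Continuous fun L : Module.Dual ℝ (PolyLE n m) => L p :=
  (continuous_apply p).comp continuous_induced_dom

instance : IsTopologicalAddGroup (Module.Dual ℝ (PolyLE n m)) :=
  topologicalAddGroup_induced (LinearMap.ltoFun ℝ (PolyLE n m) ℝ ℝ)

instance : ContinuousSMul ℝ (Module.Dual ℝ (PolyLE n m)) :=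
  continuousSMul_induced (LinearMap.ltoFun ℝ (PolyLE n m) ℝ ℝ)

instance : LocallyConvexSpace ℝ (Module.Dual ℝ (PolyLE n m)) :=
  LocallyConvexSpace.induced (LinearMap.ltoFun ℝ (PolyLE n m) ℝ ℝ)

theorem isClosed_pconeDual (S : Set (Fin n → ℝ)) : IsClosed (PconeDual n m S) := by
  simp only [PconeDual, Set.ofPred_forall]
  exact isClosed_iInter fun p => isClosed_iInter fun _ =>
    isClosed_le continuous_const (continuous_dual_apply n m p)

end DualTopology

namespace SupportIn

variable {α : Type*} [TopologicalSpace α] [MeasurableSpace α] {μ ν : Measure α} {S : Set α}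

theorem ae_mem [SecondCountableTopology α] [OpensMeasurableSpace α] (h : SupportIn μ S) :
    ∀ᵐ x ∂μ, x ∈ S := by
  choose U hUo hxU hU0 using h
  obtain ⟨T, hTc, hTeq⟩ := TopologicalSpace.isOpen_iUnion_countable
    (fun x : {x // x ∉ S} => U x x.2) (fun x => hUo x x.2)
  have hnull : μ (⋃ x ∈ T, U x x.2) = 0 := (measure_biUnion_null_iff hTc).2 fun x _ => hU0 x x.2
  rw [hTeq] at hnull
  exact measure_mono_null (fun x hx => Set.mem_iUnion.2 ⟨⟨x, hx⟩, hxU x hx⟩) hnull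

theorem add (hμ : SupportIn μ S) (hν : SupportIn ν S) : SupportIn (μ + ν) S := by
  intro x hx
  obtain ⟨U, hUo, hxU, hU0⟩ := hμ x hx
  obtain ⟨V, hVo, hxV, hV0⟩ := hν x hx
  refine ⟨U ∩ V, hUo.inter hVo, ⟨hxU, hxV⟩, ?_⟩
  rw [Measure.add_apply, measure_mono_null Set.inter_subset_left hU0,
    measure_mono_null Set.inter_subset_right hV0, add_zero]

theorem smul (h : SupportIn μ S) (c : ENNReal) : SupportIn (c • μ) S := by
  intro x hx
  obtain ⟨U, hUo, hxU, hU0⟩ := h x hx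
  exact ⟨U, hUo, hxU, by simp [hU0]⟩

theorem dirac [T1Space α] [OpensMeasurableSpace α] {x : α} (hx : x ∈ S) :
    SupportIn (Measure.dirac x) S := fun y hy =>
  ⟨{x}ᶜ, isClosed_singleton.isOpen_compl, fun h => hy (h ▸ hx),
    by simp [Measure.dirac_apply' _ (measurableSet_singleton x).compl]⟩

end SupportIn

section MomentCone

variable {n m : ℕ} {S : Set (Fin n → ℝ)}

theorem totalDegree_le_of_mem_polyLE (p : PolyLE n m) :
    (p : MvPolynomial (Fin n) ℝ).totalDegree ≤ m :=
  (mem_restrictTotalDegree _ _ _).1 p.2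

variable (n m S) in
def momentPointedCone : PointedCone ℝ (Module.Dual ℝ (PolyLE n m)) where
  carrier := MomentCone n m S
  zero_mem' := ⟨0, fun _ _ => ⟨Set.univ, isOpen_univ, trivial, rfl⟩,
    fun _ _ => integrable_zero_measure, fun _ => by simp⟩
  add_mem' := by
    rintro L₁ L₂ ⟨μ₁, hS₁, hi₁, hL₁⟩ ⟨μ₂, hS₂, hi₂, hL₂⟩
    refine ⟨μ₁ + μ₂, hS₁.add hS₂, fun p hp => integrable_add_measure.2 ⟨hi₁ p hp, hi₂ p hp⟩,
      fun p => ?_⟩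
    have hp := totalDegree_le_of_mem_polyLE p
    rw [LinearMap.add_apply, hL₁, hL₂, integral_add_measure (hi₁ _ hp) (hi₂ _ hp)]
  smul_mem' := by
    rintro ⟨c, hc⟩ L ⟨μ, hS, hi, hL⟩
    refine ⟨ENNReal.ofReal c • μ, hS.smul _,
      fun p hp => (hi p hp).smul_measure ENNReal.ofReal_ne_top, fun p => ?_⟩
    rw [Nonneg.mk_smul, LinearMap.smul_apply, hL, integral_smul_measure,
      ENNReal.toReal_ofReal hc, smul_eq_mul]

variable (m) in
def evalDual (x : Fin n → ℝ) : Module.Dual ℝ (PolyLE n m) where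
  toFun p := eval x (p : MvPolynomial (Fin n) ℝ)
  map_add' p q := by simp
  map_smul' c p := by simp

theorem evalDual_mem_momentCone {x : Fin n → ℝ} (hx : x ∈ S) :
    evalDual m x ∈ MomentCone n m S := by
  refine ⟨Measure.dirac x, SupportIn.dirac hx, fun p _ => ?_, fun p => ?_⟩
  · have hc := continuous_eval p
    exact ⟨hc.aestronglyMeasurable, by
      rw [HasFiniteIntegral, lintegral_dirac' _ hc.measurable.enorm]; exact ENNReal.coe_lt_top⟩
  · rw [integral_dirac]; rfl

theorem momentCone_subset_pconeDual : MomentCone n m S ⊆ PconeDual n m S := by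
  rintro L ⟨μ, hS, -, hL⟩ p hp
  rw [hL]
  exact integral_nonneg_of_ae (by filter_upwards [hS.ae_mem] with x hx using hp x hx)

end MomentCone

theorem closure_momentCone_eq_pconeDual (n m : ℕ) (S : Set (Fin n → ℝ)) :
    closure (MomentCone n m S) = PconeDual n m S := by
  refine subset_antisymm ((isClosed_pconeDual n m S).closure_subset_iff.2
    momentCone_subset_pconeDual) fun L hL => ?_
  by_contra hLM
  let C : ProperCone ℝ (Module.Dual ℝ (PolyLE n m)) :=
    ⟨(momentPointedCone n m S).closure, isClosed_closure⟩
  obtain ⟨f, hfC, hfL⟩ := C.hyperplane_separation_point (x₀ := L) hLM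
  set p := (Module.evalEquiv ℝ (PolyLE n m)).symm
    (f : Module.Dual ℝ (Module.Dual ℝ (PolyLE n m)))
  have hp (L' : Module.Dual ℝ (PolyLE n m)) : L' p = f L' :=
    Module.apply_evalEquiv_symm_apply ℝ (PolyLE n m) L' _
  have hpS : p ∈ Pcone n m S := fun x hx => by
    have hfx := hfC _ (subset_closure (evalDual_mem_momentCone hx))
    rw [← hp] at hfx
    exact hfx
  exact (hL p hpS).not_gt (by rwa [hp])

theorem stmt_5_general (n d : ℕ) (S : Set (Fin n → ℝ)) :
    closure (MomentCone n (2 * d) S) = PconeDual n (2 * d) S :=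
  closure_momentCone_eq_pconeDual n (2 * d) S

/-- Proposition `momclo`: the closure of the truncated moment cone `M_{2d}(S)` in the dual
space of `ℝ[X₁,…,Xₙ]_{2d}` equals `P_{2d}(S)*`. -/
theorem stmt_5 (n d : ℕ) (hn : 0 < n) (hd : 0 < d) (S : Set (Fin n → ℝ)) :
    closure (MomentCone n (2 * d) S) = PconeDual n (2 * d) S :=
  stmt_5_general n d S

end
end

section
/- Let n, d be positive integers and let h ∈ ℝ[X₁,…,Xₙ] be a polynomial of degree at most 2d with h(x) ≥ 0 for all x ∈ ℝⁿ and whose homogeneous part of degree 2d equals X₁^{2d} + ⋯ + Xₙ^{2d}. Then the real zero set Z(h) = {x ∈ ℝⁿ : h(x) = 0} has at most (2d−1)ⁿ elements. -/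
/-!
At a zero `x` of the nonnegative polynomial `h` every partial derivative vanishes, and since
`∂ᵢh = 2d Xᵢ^{2d-1} + ∂ᵢr` with `deg ∂ᵢr ≤ 2d - 2`, every zero satisfies
`xᵢ^{2d-1} = gᵢ(x)` for polynomials `gᵢ` of degree `< 2d - 1`. Rewriting `Xᵢ^{2d-1}` by `gᵢ`
strictly lowers the degree, so on any finite set `S` of zeros every polynomial function agrees
with a combination of the `(2d-1)ⁿ` monomials whose exponents are all `< 2d - 1`. On the other
hand, by Lagrange interpolation every function `S → ℝ` is polynomial; hence `|S| ≤ (2d-1)ⁿ`.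
-/

open MvPolynomial

theorem Set.encard_le_of_forall_finite_subset {α : Type*} {s : Set α} {N : ℕ}
    (h : ∀ t ⊆ s, t.Finite → t.ncard ≤ N) : s.encard ≤ N := by
  by_cases hs : s.Finite
  · rw [← hs.cast_ncard_eq]
    exact_mod_cast h s subset_rfl hs
  · obtain ⟨t, hts, ht, hcard⟩ := Set.Infinite.exists_subset_ncard_eq hs (N + 1)
    have := h t hts ht
    omega

namespace MvPolynomial

variable {σ : Type*}

theorem hasDerivAt_eval_update {𝕜 : Type*} [NontriviallyNormedField 𝕜] [DecidableEq σ]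
    (p : MvPolynomial σ 𝕜) (x : σ → 𝕜) (i : σ) (t : 𝕜) :
    HasDerivAt (fun s => eval (Function.update x i s) p)
      (eval (Function.update x i t) (pderiv i p)) t := by
  induction p using MvPolynomial.induction_on with
  | C a => simpa using hasDerivAt_const t (eval (Function.update x i t) (C a))
  | add p q hp hq => simpa using hp.fun_add hq
  | mul_X p j hp =>
    have hXj : HasDerivAt (fun s => Function.update x i s j) (if j = i then 1 else 0) t := by
      by_cases hj : j = i
      · subst hj; simpa using hasDerivAt_id' t
      · simpa [hj] using hasDerivAt_const t (x j)
    simp only [eval_mul, eval_X]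
    refine (hp.fun_mul hXj).congr_deriv ?_
    by_cases hj : j = i
    · subst hj
      simp only [Function.update_self, ↓reduceIte, mul_one, Derivation.leibniz, pderiv_X,
        Pi.single_eq_same, smul_eq_mul, map_add, map_mul, eval_X]
      ring
    · simp [hj, mul_comm]

theorem eval_pderiv_eq_zero_of_isMinOn [DecidableEq σ] {p : MvPolynomial σ ℝ} {x : σ → ℝ}
    (hmin : IsMinOn (eval · p) Set.univ x) (i : σ) : eval x (pderiv i p) = 0 := by
  have hline : IsLocalMin (fun s => eval (Function.update x i s) p) (x i) :=
    Filter.Eventually.of_forall fun s => by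
      simpa using hmin (Set.mem_univ (Function.update x i s))
  simpa using hline.hasDerivAt_eq_zero (hasDerivAt_eval_update p x i (x i))

theorem totalDegree_pderiv_le {R : Type*} [CommSemiring R] (p : MvPolynomial σ R) (i : σ) :
    (pderiv i p).totalDegree ≤ p.totalDegree - 1 := by
  refine Finset.sup_le fun m hm => ?_
  have hcoeff : coeff (m + Finsupp.single i 1) p ≠ 0 := by
    intro h0
    simp [mem_support_iff, coeff_pderiv, h0] at hm
  have := le_totalDegree (mem_support_iff.mpr hcoeff)
  simp only [implies_true, Finsupp.sum_add_index', Finsupp.sum_single_index] at this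
  omega

theorem totalDegree_sub_homogeneousComponent_le {R : Type*} [CommRing R] {p : MvPolynomial σ R}
    {D : ℕ} (hp : p.totalDegree ≤ D) : (p - homogeneousComponent D p).totalDegree ≤ D - 1 := by
  refine Finset.sup_le fun m hm => ?_
  rw [mem_support_iff, coeff_sub, coeff_homogeneousComponent] at hm
  by_cases hD : m.degree = D
  · simp [hD] at hm
  · simp only [hD, if_false, sub_zero] at hm
    have : m.degree ≤ p.totalDegree := le_totalDegree (mem_support_iff.mpr hm)
    change m.degree ≤ D - 1
    omega

section Field

variable {K : Type*} [Field K]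

noncomputable def evalOn (S : Set (σ → K)) : MvPolynomial σ K →ₐ[K] S → K :=
  AlgHom.pi fun s => aeval s.1

@[simp]
theorem evalOn_apply (S : Set (σ → K)) (p : MvPolynomial σ K) (s : S) :
    evalOn S p s = eval s.1 p := rfl

theorem exists_evalOn_eq_single (S : Set (σ → K)) [Finite S] [DecidableEq S] (s : S) :
    ∃ p, evalOn S p = Pi.single s 1 := by
  choose c hc using fun t : {t : S // t ≠ s} => Function.ne_iff.mp (Subtype.coe_ne_coe.mpr t.2)
  have := Fintype.ofFinite S
  refine ⟨∏ t : {t : S // t ≠ s}, C (s.1 (c t) - t.1.1 (c t))⁻¹ * (X (c t) - C (t.1.1 (c t))), ?_⟩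
  ext u
  rcases eq_or_ne u s with rfl | hu
  · simp [sub_ne_zero.mpr (hc _).symm]
  · rw [Pi.single_eq_of_ne hu, evalOn_apply, map_prod]
    exact Finset.prod_eq_zero (Finset.mem_univ ⟨u, hu⟩) (by simp)

theorem range_evalOn_eq_top (S : Set (σ → K)) [Finite S] :
    LinearMap.range (evalOn S).toLinearMap = ⊤ := by
  classical
  rw [eq_top_iff, ← (Pi.basisFun K S).span_eq, Submodule.span_le]
  rintro _ ⟨s, rfl⟩
  obtain ⟨p, hp⟩ := exists_evalOn_eq_single S s
  exact ⟨p, by simpa using hp⟩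

def reducedMonomialSpan [Fintype σ] (S : Set (σ → K)) (e : ℕ) : Submodule K (S → K) :=
  Submodule.span K (Set.range fun v : σ → Fin e => fun s : S => ∏ i, s.1 i ^ (v i : ℕ))

theorem range_evalOn_le_reducedMonomialSpan [Fintype σ] {S : Set (σ → K)} {e : ℕ}
    (g : σ → MvPolynomial σ K) (hg : ∀ i, (g i).totalDegree < e)
    (hS : ∀ x ∈ S, ∀ i, x i ^ e = eval x (g i)) :
    LinearMap.range (evalOn S).toLinearMap ≤ reducedMonomialSpan S e := by
  classical
  have hX (i : σ) : evalOn S (X i ^ e) = evalOn S (g i) := by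
    ext s
    simpa using hS s.1 s.2 i
  suffices ∀ D, ∀ p : MvPolynomial σ K, p.totalDegree ≤ D → evalOn S p ∈ reducedMonomialSpan S e by
    rintro _ ⟨p, rfl⟩
    exact this _ p le_rfl
  intro D
  induction D using Nat.strong_induction_on with
  | _ D ih =>
  intro p hp
  rw [p.as_sum, map_sum]
  refine Submodule.sum_mem _ fun m hm => ?_
  by_cases hlow : ∀ i, m i < e
  · rw [← mul_one (coeff m p), ← smul_eq_mul, ← smul_monomial, map_smul]
    refine Submodule.smul_mem _ _ (Submodule.subset_span ⟨fun i => ⟨m i, hlow i⟩, ?_⟩)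
    ext s
    simp [eval_monomial, Finsupp.prod_fintype]
  · obtain ⟨i, hi⟩ := not_forall.mp hlow
    obtain ⟨m', rfl⟩ := exists_add_of_le (Finsupp.single_le_iff.mpr (not_lt.mp hi))
    have hdeg : (monomial m' (coeff (Finsupp.single i e + m') p) * g i).totalDegree < D := by
      have hmono := totalDegree_monomial_le m' (coeff (Finsupp.single i e + m') p)
      have hsupp := le_totalDegree hm
      rw [Finsupp.sum_fintype _ _ fun _ => rfl] at hmono hsupp
      simp only [Finsupp.coe_add, Pi.add_apply, Finset.sum_add_distrib, Finsupp.single_apply,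
        Finset.sum_ite_eq, Finset.mem_univ, if_true, id] at hmono hsupp
      have := totalDegree_mul (monomial m' (coeff (Finsupp.single i e + m') p)) (g i)
      have := hg i
      omega
    have heq : evalOn S (monomial (Finsupp.single i e + m') (coeff (Finsupp.single i e + m') p))
        = evalOn S (monomial m' (coeff (Finsupp.single i e + m') p) * g i) := by
      rw [map_mul, ← hX, ← map_mul, X_pow_eq_monomial, monomial_mul, mul_one, add_comm]
    rw [heq]
    exact ih _ hdeg _ le_rfl

theorem finrank_reducedMonomialSpan_le [Fintype σ] (S : Set (σ → K)) (e : ℕ) :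
    Module.finrank K (reducedMonomialSpan S e) ≤ e ^ Fintype.card σ := by
  classical
  exact (finrank_range_le_card _).trans (by simp)

theorem ncard_le_of_pow_eq_eval [Fintype σ] {S : Set (σ → K)} [Finite S] {e : ℕ}
    (g : σ → MvPolynomial σ K) (hg : ∀ i, (g i).totalDegree < e)
    (hS : ∀ x ∈ S, ∀ i, x i ^ e = eval x (g i)) :
    S.ncard ≤ e ^ Fintype.card σ := by
  have hspan : reducedMonomialSpan S e = ⊤ :=
    top_le_iff.mp ((range_evalOn_eq_top S).symm.trans_le
      (range_evalOn_le_reducedMonomialSpan g hg hS))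
  have := Fintype.ofFinite S
  calc S.ncard = Module.finrank K (S → K) := by
        rw [Module.finrank_fintype_fun_eq_card, ← Nat.card_eq_fintype_card, Nat.card_coe_set_eq]
    _ = Module.finrank K (reducedMonomialSpan S e) := by rw [hspan, finrank_top]
    _ ≤ e ^ Fintype.card σ := finrank_reducedMonomialSpan_le S e

theorem encard_le_of_pow_eq_eval [Fintype σ] {S : Set (σ → K)} {e : ℕ}
    (g : σ → MvPolynomial σ K) (hg : ∀ i, (g i).totalDegree < e)
    (hS : ∀ x ∈ S, ∀ i, x i ^ e = eval x (g i)) :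
    S.encard ≤ (e ^ Fintype.card σ : ℕ) :=
  Set.encard_le_of_forall_finite_subset fun _T hTS hT =>
    have := hT.to_subtype
    ncard_le_of_pow_eq_eval g hg fun x hx => hS x (hTS hx)

end Field

theorem pderiv_sum_X_pow [Fintype σ] [DecidableEq σ] {R : Type*} [CommSemiring R] (k : ℕ)
    (i : σ) :
    pderiv i (∑ j, X j ^ k : MvPolynomial σ R) = (k : MvPolynomial σ R) * X i ^ (k - 1) := by
  simp [pderiv_X, Pi.single_apply]

theorem exists_pow_eq_eval_of_isMinOn [Fintype σ] {p : MvPolynomial σ ℝ} {k : ℕ} (hk : 2 ≤ k)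
    (hdeg : p.totalDegree ≤ k) (hlead : homogeneousComponent k p = ∑ i, X i ^ k) :
    ∃ g : σ → MvPolynomial σ ℝ, (∀ i, (g i).totalDegree < k - 1) ∧
      ∀ x, IsMinOn (eval · p) Set.univ x → ∀ i, x i ^ (k - 1) = eval x (g i) := by
  classical
  set r := p - homogeneousComponent k p with hr
  refine ⟨fun i => -(k : ℝ)⁻¹ • pderiv i r, fun i => ?_, fun x hx i => ?_⟩
  · calc _ ≤ (pderiv i r).totalDegree := totalDegree_smul_le _ _
      _ ≤ r.totalDegree - 1 := totalDegree_pderiv_le r i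
      _ ≤ k - 1 - 1 := Nat.sub_le_sub_right (totalDegree_sub_homogeneousComponent_le hdeg) 1
      _ < k - 1 := by omega
  · have hcrit := eval_pderiv_eq_zero_of_isMinOn hx i
    rw [show p = ∑ j, (X j : MvPolynomial σ ℝ) ^ k + r by rw [hr, hlead]; ring, map_add,
      pderiv_sum_X_pow, eval_add] at hcrit
    have hk0 : (k : ℝ) ≠ 0 := by positivity
    simp only [map_mul, map_natCast, map_pow, eval_X, neg_smul, map_neg, smul_eval] at hcrit ⊢
    field_simp
    linarith

end MvPolynomial

theorem stmt_6_general (n d : ℕ) (hd : 0 < d) (h : MvPolynomial (Fin n) ℝ)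
    (hdeg : h.totalDegree ≤ 2 * d)
    (hnn : ∀ x : Fin n → ℝ, 0 ≤ eval x h)
    (hlead : MvPolynomial.homogeneousComponent (2 * d) h = ∑ i : Fin n, X i ^ (2 * d)) :
    {x : Fin n → ℝ | eval x h = 0}.Finite ∧
    {x : Fin n → ℝ | eval x h = 0}.ncard ≤ (2 * d - 1) ^ n := by
  obtain ⟨g, hg, hpow⟩ := exists_pow_eq_eval_of_isMinOn (by omega : 2 ≤ 2 * d) hdeg hlead
  have hmin : ∀ x ∈ {x : Fin n → ℝ | eval x h = 0}, IsMinOn (eval · h) Set.univ x :=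
    fun x hx y _ => by simpa [show eval x h = 0 from hx] using hnn y
  simpa using Set.encard_le_coe_iff_finite_ncard_le.mp
    (encard_le_of_pow_eq_eval g hg fun x hx => hpow x (hmin x hx))

/-- Proposition `norm2dbound`: a globally nonnegative polynomial of degree at most `2d` whose
degree-`2d` homogeneous part is `X₁^{2d} + ⋯ + Xₙ^{2d}` has at most `(2d-1)ⁿ` real zeros. -/
theorem stmt_6 (n d : ℕ) (hn : 0 < n) (hd : 0 < d) (h : MvPolynomial (Fin n) ℝ)
    (hdeg : h.totalDegree ≤ 2 * d)
    (hnn : ∀ x : Fin n → ℝ, 0 ≤ eval x h)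
    (hlead : MvPolynomial.homogeneousComponent (2 * d) h = ∑ i : Fin n, X i ^ (2 * d)) :
    {x : Fin n → ℝ | eval x h = 0}.Finite ∧
    {x : Fin n → ℝ | eval x h = 0}.ncard ≤ (2 * d - 1) ^ n :=
  stmt_6_general n d hd h hdeg hnn hlead
end

section
/- Let h ∈ ℝ[X,Y] be a square-free polynomial. Then h has only finitely many double roots in ℂ², i.e., the set {(x,y) ∈ ℂ² : h(x,y) = 0, (∂h/∂X)(x,y) = 0, (∂h/∂Y)(x,y) = 0} is finite. -/
/-!
View `h` as a polynomial in `Y` over `ℝ[X]`. By Gauss's lemma it stays squarefree over the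
fraction field `ℝ(X)`, where (characteristic zero) squarefree means coprime to its `Y`-derivative.
Clearing denominators in a Bézout identity gives `a h + b ∂h/∂Y = d(X)` with `d ≠ 0`, so the
`X`-coordinate of a double root is one of the finitely many roots of `d`. Exchanging the
variables bounds the `Y`-coordinate in the same way.
-/

open MvPolynomial

theorem Squarefree.map_mulEquiv {M N : Type*} [Monoid M] [Monoid N] (e : M ≃* N) {x : M}
    (hx : Squarefree x) : Squarefree (e x) := by
  intro y hy
  have : e.symm y * e.symm y ∣ x := by simpa using map_dvd e.symm hy
  simpa using (hx _ this).map e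

namespace Polynomial

variable {R K : Type*} [CommRing R] [IsDomain R] [Field K] [Algebra R K] [IsFractionRing R K]

theorem exists_isPrimitive_map_associated [NormalizedGCDMonoid R] {q : K[X]} (hq : q ≠ 0) :
    ∃ Q : R[X], Q.IsPrimitive ∧ Associated (Q.map (algebraMap R K)) q := by
  set N := IsLocalization.integerNormalization (nonZeroDivisors R) q
  obtain ⟨b, hb, hNq⟩ := IsLocalization.integerNormalization_spec (nonZeroDivisors R) q
  have hN : N ≠ 0 := fun h => hq (IsFractionRing.integerNormalization_eq_zero_iff.mp h)
  have hunit {c : R} (hc : c ∈ nonZeroDivisors R) : IsUnit (C (algebraMap R K c)) :=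
    isUnit_C.mpr (IsFractionRing.to_map_ne_zero_of_mem_nonZeroDivisors hc).isUnit
  have hcontent : N.content ∈ nonZeroDivisors R :=
    mem_nonZeroDivisors_of_ne_zero (mt content_eq_zero_iff.mp hN)
  have key : C (algebraMap R K N.content) * N.primPart.map (algebraMap R K)
      = C (algebraMap R K b) * q := by
    rw [← map_C, ← Polynomial.map_mul, ← N.eq_C_content_mul_primPart, hNq,
      ← algebraMap_smul K b q, smul_eq_C_mul]
  refine ⟨N.primPart, N.isPrimitive_primPart, ?_⟩
  exact (associated_unit_mul_left _ _ (hunit hcontent)).symm.trans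
    (key ▸ associated_unit_mul_left _ _ (hunit hb))

theorem squarefree_map_algebraMap [NormalizedGCDMonoid R] {f : R[X]} (hf : Squarefree f) :
    Squarefree (f.map (algebraMap R K)) := by
  have hf0 : f.map (algebraMap R K) ≠ 0 :=
    (Polynomial.map_ne_zero_iff (IsFractionRing.injective R K)).mpr hf.ne_zero
  intro q hq
  obtain ⟨Q, hQ, hQq⟩ := exists_isPrimitive_map_associated (R := R)
    (left_ne_zero_of_mul (ne_zero_of_dvd_ne_zero hf0 hq))
  have hQQ : Q * Q ∣ f := (hQ.mul hQ).dvd_of_fraction_map_dvd_fraction_map (K := K) <| by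
    rwa [Polynomial.map_mul, ((hQq.mul_mul hQq).dvd_iff_dvd_left)]
  exact hQq.isUnit ((hf Q hQQ).map (mapRingHom (algebraMap R K)))

theorem exists_mul_add_mul_eq_C_of_isCoprime_map {f g : R[X]}
    (h : IsCoprime (f.map (algebraMap R K)) (g.map (algebraMap R K))) :
    ∃ a b : R[X], ∃ d : R, d ≠ 0 ∧ a * f + b * g = C d := by
  obtain ⟨a, b, hab⟩ := h
  obtain ⟨ca, hca, ha⟩ := IsLocalization.integerNormalization_spec (nonZeroDivisors R) a (S := K)
  obtain ⟨cb, hcb, hb⟩ := IsLocalization.integerNormalization_spec (nonZeroDivisors R) b (S := K)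
  refine ⟨C cb * IsLocalization.integerNormalization (nonZeroDivisors R) a,
    C ca * IsLocalization.integerNormalization (nonZeroDivisors R) b, ca * cb, ?_, ?_⟩
  · exact mul_ne_zero (nonZeroDivisors.ne_zero hca) (nonZeroDivisors.ne_zero hcb)
  · apply map_injective _ (IsFractionRing.injective R K)
    simp only [Polynomial.map_add, Polynomial.map_mul, map_C, ha, hb, map_mul]
    rw [← algebraMap_smul K ca, ← algebraMap_smul K cb, smul_eq_C_mul, smul_eq_C_mul]
    linear_combination C (algebraMap R K ca) * C (algebraMap R K cb) * hab

theorem exists_mul_add_mul_derivative_eq_C_of_squarefree [NormalizedGCDMonoid R] [CharZero R]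
    {f : R[X]} (hf : Squarefree f) :
    ∃ a b : R[X], ∃ d : R, d ≠ 0 ∧ a * f + b * derivative f = C d := by
  apply exists_mul_add_mul_eq_C_of_isCoprime_map (K := FractionRing R)
  rw [← derivative_map]
  exact PerfectField.separable_iff_squarefree.mpr (squarefree_map_algebraMap hf)

end Polynomial

namespace MvPolynomial

open Polynomial.Bivariate in
theorem exists_mul_add_mul_pderiv_one_eq {k : Type*} [Field k] [CharZero k]
    {h : MvPolynomial (Fin 2) k} (hh : Squarefree h) :
    ∃ a b : MvPolynomial (Fin 2) k, ∃ d : Polynomial k, d ≠ 0 ∧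
      a * h + b * pderiv 1 h = Polynomial.aeval (X 0) d := by
  classical
  set e := equivMvPolynomial k
  have hsq : Squarefree (e.symm h) := hh.map_mulEquiv e.symm.toMulEquiv
  obtain ⟨a, b, d, hd, hab⟩ := Polynomial.exists_mul_add_mul_derivative_eq_C_of_squarefree hsq
  refine ⟨e a, e b, d, hd, ?_⟩
  have := congrArg e hab
  rw [map_add, map_mul, map_mul, ← pderiv_one_equivMvPolynomial, e.apply_symm_apply] at this
  rw [this]
  simp [e, equivMvPolynomial, Polynomial.eval_map, Polynomial.aeval_def]

theorem finite_eval_zero_image_of_squarefree {k L : Type*} [Field k] [CharZero k]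
    [CommRing L] [IsDomain L] [Algebra k L] {h : MvPolynomial (Fin 2) k} (hh : Squarefree h) :
    ((fun z : Fin 2 → L => z 0) '' {z | aeval z h = 0 ∧ aeval z (pderiv 1 h) = 0}).Finite := by
  obtain ⟨a, b, d, hd, hab⟩ := exists_mul_add_mul_pderiv_one_eq hh
  refine (d.rootSet_finite L).subset ?_
  rintro _ ⟨z, ⟨hz, hz'⟩, rfl⟩
  refine Polynomial.mem_rootSet.mpr ⟨hd, ?_⟩
  have := congrArg (aeval z) hab
  rwa [← Polynomial.aeval_algHom_apply, aeval_X, map_add, map_mul, map_mul, hz, hz', mul_zero,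
    mul_zero, add_zero, eq_comm] at this

theorem finite_eval_one_image_of_squarefree {k L : Type*} [Field k] [CharZero k]
    [CommRing L] [IsDomain L] [Algebra k L] {h : MvPolynomial (Fin 2) k} (hh : Squarefree h) :
    ((fun z : Fin 2 → L => z 1) '' {z | aeval z h = 0 ∧ aeval z (pderiv 0 h) = 0}).Finite := by
  set σ := Equiv.swap (0 : Fin 2) 1
  refine (finite_eval_zero_image_of_squarefree (L := L)
    (hh.map_mulEquiv (renameEquiv k σ).toMulEquiv)).subset ?_
  rintro _ ⟨z, ⟨hz, hz'⟩, rfl⟩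
  have hσ : (z ∘ σ) ∘ σ = z := by ext i; simp [σ]
  have hpderiv : pderiv 1 (rename σ h) = rename σ (pderiv 0 h) := by
    simpa [σ] using pderiv_rename σ.injective 0 h
  refine ⟨z ∘ σ, ⟨?_, ?_⟩, by simp [σ]⟩
  · simpa [aeval_rename, hσ] using hz
  · simpa [hpderiv, aeval_rename, hσ] using hz'

end MvPolynomial

/-- Lemma `quadratfrei`: a square-free polynomial in `ℝ[X,Y]` has only finitely many double
roots in `ℂ²`, i.e. points where it vanishes together with both partial derivatives. -/
theorem stmt_13 (h : MvPolynomial (Fin 2) ℝ)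
    (hsf : ∀ p : MvPolynomial (Fin 2) ℝ, Irreducible p → ¬ (p * p ∣ h)) :
    {z : Fin 2 → ℂ | aeval z h = 0 ∧
      aeval z (MvPolynomial.pderiv (0 : Fin 2) h) = 0 ∧
      aeval z (MvPolynomial.pderiv (1 : Fin 2) h) = 0}.Finite := by
  have hh : Squarefree h := (squarefree_iff_irreducible_sq_not_dvd_of_exists_irreducible
    ⟨X 0, X_prime.irreducible⟩).mpr hsf
  refine (Set.Finite.pi fun i => ?_).subset (Set.subset_pi_eval_image Set.univ _)
  fin_cases i
  · exact (finite_eval_zero_image_of_squarefree hh).subset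
      (Set.image_mono fun z hz => ⟨hz.1, hz.2.2⟩)
  · exact (finite_eval_one_image_of_squarefree hh).subset
      (Set.image_mono fun z hz => ⟨hz.1, hz.2.1⟩)
end

section
/- Let d be a positive integer, let G := {1,…,d−1} × {1,…,d−1} ⊆ ℝ², let w : G → (0,∞) be any weight function, and define the linear functional L on ℝ[X,Y]_{2d−1} by L(p) := Σ_{z∈G} w(z)·p(z). Then w is the unique quadrature rule for L; in particular, every quadrature rule for L has exactly (d−1)² nodes. -/
open MvPolynomial

noncomputable section

/-- A quadrature rule for a linear functional on `ℝ[X₁,…,Xₙ]_m`. -/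
def IsQuadratureRule {n m : ℕ} (L : Module.Dual ℝ (PolyLE n m))
    (N : Finset (Fin n → ℝ)) (w : (Fin n → ℝ) → ℝ) : Prop :=
  (∀ x ∈ N, 0 < w x) ∧
  ∀ p : PolyLE n m, L p = ∑ x ∈ N, w x * eval x (p : MvPolynomial (Fin n) ℝ)

namespace Stmt16Aux

lemma tdeg_lin (k : Fin 2) (r : ℝ) :
    (X k - C r : MvPolynomial (Fin 2) ℝ).totalDegree ≤ 1 := by
  rw [sub_eq_add_neg, ← C_neg]
  refine (totalDegree_add _ _).trans ?_
  simp [totalDegree_X, totalDegree_C]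

lemma tdeg_sq_prod (k : Fin 2) (s : Finset ℕ) :
    (∏ i ∈ s, (X k - C (i : ℝ)) ^ 2 : MvPolynomial (Fin 2) ℝ).totalDegree ≤ 2 * s.card := by
  refine (totalDegree_finset_prod _ _).trans ?_
  calc ∑ i ∈ s, ((X k - C (i : ℝ)) ^ 2 : MvPolynomial (Fin 2) ℝ).totalDegree
      ≤ ∑ _i ∈ s, 2 := Finset.sum_le_sum (fun i _ =>
        (totalDegree_pow _ _).trans (by
          have := tdeg_lin k (i : ℝ); omega))
    _ = 2 * s.card := by rw [Finset.sum_const, smul_eq_mul, mul_comm]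

lemma tdeg_prod1 (k : Fin 2) (s : Finset ℕ) :
    (∏ i ∈ s, (X k - C (i : ℝ)) : MvPolynomial (Fin 2) ℝ).totalDegree ≤ s.card := by
  refine (totalDegree_finset_prod _ _).trans ?_
  calc ∑ i ∈ s, ((X k - C (i : ℝ)) : MvPolynomial (Fin 2) ℝ).totalDegree
      ≤ ∑ _i ∈ s, 1 := Finset.sum_le_sum (fun i _ => tdeg_lin k (i : ℝ))
    _ = s.card := by simp

lemma eval_sq_prod (z : Fin 2 → ℝ) (k : Fin 2) (s : Finset ℕ) :
    eval z (∏ i ∈ s, (X k - C (i : ℝ)) ^ 2 : MvPolynomial (Fin 2) ℝ)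
      = ∏ i ∈ s, (z k - (i : ℝ)) ^ 2 := by
  simp

lemma eval_lag (z : Fin 2 → ℝ) (s t : Finset ℕ) :
    eval z ((∏ i ∈ s, (X 0 - C (i : ℝ))) * ∏ j ∈ t, (X 1 - C (j : ℝ)) :
      MvPolynomial (Fin 2) ℝ)
      = (∏ i ∈ s, (z 0 - (i : ℝ))) * ∏ j ∈ t, (z 1 - (j : ℝ)) := by
  simp

lemma coord_mem (S : Finset ℕ) (q : ℕ × ℕ) (h1 : q.1 ∈ S) (h2 : q.2 ∈ S) (k : Fin 2) :
    ∃ m ∈ S, (![(q.1 : ℝ), (q.2 : ℝ)]) k = (m : ℝ) := by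
  fin_cases k
  · exact ⟨q.1, h1, by simp⟩
  · exact ⟨q.2, h2, by simp⟩

lemma grid_inj : Function.Injective (fun p : ℕ × ℕ => ![(p.1 : ℝ), (p.2 : ℝ)]) := by
  intro p q h
  have h0 := congrFun h 0
  have h1 := congrFun h 1
  simp only [Matrix.cons_val_zero, Matrix.cons_val_one, Matrix.head_cons, Nat.cast_inj]
    at h0 h1
  exact Prod.ext h0 h1

end Stmt16Aux

open Stmt16Aux in
/-- Remark `lowb`: for the grid `G = {1,…,d-1}²` and any positive weights `w` on `G`, the
functional `L(p) = ∑_{z∈G} w(z)p(z)` on `ℝ[X,Y]_{2d-1}` has `w` as its unique quadrature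
rule; in particular every quadrature rule for `L` has exactly `(d-1)²` nodes. -/
theorem stmt_16 (d : ℕ) (hd : 0 < d)
    (G : Finset (Fin 2 → ℝ))
    (hG : G = ((Finset.Icc 1 (d - 1)) ×ˢ (Finset.Icc 1 (d - 1))).image
      (fun p : ℕ × ℕ => ![(p.1 : ℝ), (p.2 : ℝ)]))
    (w : (Fin 2 → ℝ) → ℝ) (hw : ∀ z ∈ G, 0 < w z)
    (L : Module.Dual ℝ (PolyLE 2 (2 * d - 1)))
    (hL : ∀ p : PolyLE 2 (2 * d - 1),
      L p = ∑ z ∈ G, w z * eval z (p : MvPolynomial (Fin 2) ℝ)) :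
    ∀ (N' : Finset (Fin 2 → ℝ)) (w' : (Fin 2 → ℝ) → ℝ),
      IsQuadratureRule L N' w' →
      N' = G ∧ (∀ z ∈ G, w' z = w z) ∧ N'.card = (d - 1) ^ 2 := by
  intro N' w' hqr
  obtain ⟨hw', hquad⟩ := hqr
  set S : Finset ℕ := Finset.Icc 1 (d - 1) with hS
  have hScard : S.card = d - 1 := by rw [hS, Nat.card_Icc]; omega
  -- Step A : every node lies on the grid
  have hNsub : N' ⊆ G := by
    intro z hz
    have key : ∀ k : Fin 2, ∃ i ∈ S, z k = (i : ℝ) := by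
      intro k
      have hfmem : (∏ i ∈ S, (X k - C (i : ℝ)) ^ 2 : MvPolynomial (Fin 2) ℝ)
          ∈ PolyLE 2 (2 * d - 1) := by
        show _ ∈ MvPolynomial.restrictTotalDegree (Fin 2) ℝ (2 * d - 1)
        rw [mem_restrictTotalDegree]
        have := tdeg_sq_prod k S
        omega
      set fp : PolyLE 2 (2 * d - 1) := ⟨_, hfmem⟩ with hfp
      have hG0 : ∀ z' ∈ G, eval z' (fp : MvPolynomial (Fin 2) ℝ) = 0 := by
        intro z' hz'
        rw [hG, Finset.mem_image] at hz'
        obtain ⟨q, hq, rfl⟩ := hz'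
        rw [Finset.mem_product] at hq
        obtain ⟨m, hm, hzm⟩ := coord_mem S q hq.1 hq.2 k
        show eval _ (∏ i ∈ S, (X k - C (i : ℝ)) ^ 2) = 0
        rw [eval_sq_prod]
        exact Finset.prod_eq_zero hm (by rw [hzm]; simp)
      have hzero : ∑ x ∈ N', w' x * eval x (fp : MvPolynomial (Fin 2) ℝ) = 0 := by
        rw [← hquad fp, hL fp]
        exact Finset.sum_eq_zero (fun z' hz' => by rw [hG0 z' hz', mul_zero])
      have hnn : ∀ x ∈ N', 0 ≤ w' x * eval x (fp : MvPolynomial (Fin 2) ℝ) := by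
        intro x hx
        have h1 : (0 : ℝ) ≤ eval x (fp : MvPolynomial (Fin 2) ℝ) := by
          show (0 : ℝ) ≤ eval x (∏ i ∈ S, (X k - C (i : ℝ)) ^ 2)
          rw [eval_sq_prod]
          exact Finset.prod_nonneg (fun i _ => sq_nonneg _)
        exact mul_nonneg (le_of_lt (hw' x hx)) h1
      have hz0 := (Finset.sum_eq_zero_iff_of_nonneg hnn).mp hzero z hz
      have heval0 : eval z (fp : MvPolynomial (Fin 2) ℝ) = 0 := by
        rcases mul_eq_zero.mp hz0 with h | h
        · exact absurd h (ne_of_gt (hw' z hz))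
        · exact h
      have hprod : ∏ i ∈ S, (z k - (i : ℝ)) ^ 2 = 0 := by
        rw [← eval_sq_prod z k S]; exact heval0
      obtain ⟨i, hi, h0⟩ := Finset.prod_eq_zero_iff.mp hprod
      exact ⟨i, hi, sub_eq_zero.mp (by
        have := sq_eq_zero_iff.mp h0; exact this)⟩
    obtain ⟨a, ha, hza⟩ := key 0
    obtain ⟨b, hb, hzb⟩ := key 1
    rw [hG, Finset.mem_image]
    refine ⟨(a, b), Finset.mem_product.mpr ⟨ha, hb⟩, ?_⟩
    funext k
    fin_cases k <;> simp [hza, hzb]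
  -- Step B : the Lagrange-type argument at each grid point
  have hlag : ∀ z0 ∈ G, ∃ (pp : PolyLE 2 (2 * d - 1)) (c : ℝ), c ≠ 0 ∧
      eval z0 (pp : MvPolynomial (Fin 2) ℝ) = c ∧
      (∀ x ∈ G, x ≠ z0 → eval x (pp : MvPolynomial (Fin 2) ℝ) = 0) := by
    intro z0 hz0
    have hz0' := hz0
    rw [hG, Finset.mem_image] at hz0'
    obtain ⟨q, hq, hz0eq⟩ := hz0'
    rw [Finset.mem_product] at hq
    obtain ⟨a, b⟩ := q
    obtain ⟨ha, hb⟩ := hq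
    set p : MvPolynomial (Fin 2) ℝ :=
      (∏ i ∈ S.erase a, (X 0 - C (i : ℝ))) * ∏ j ∈ S.erase b, (X 1 - C (j : ℝ)) with hp
    have hpmem : p ∈ PolyLE 2 (2 * d - 1) := by
      show _ ∈ MvPolynomial.restrictTotalDegree (Fin 2) ℝ (2 * d - 1)
      rw [mem_restrictTotalDegree]
      refine (totalDegree_mul _ _).trans ?_
      have h1 := (tdeg_prod1 0 (S.erase a)).trans
        ((Finset.card_erase_le).trans hScard.le)
      have h2 := (tdeg_prod1 1 (S.erase b)).trans
        ((Finset.card_erase_le).trans hScard.le)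
      omega
    set c : ℝ :=
      (∏ i ∈ S.erase a, ((a : ℝ) - (i : ℝ))) * ∏ j ∈ S.erase b, ((b : ℝ) - (j : ℝ))
      with hc
    have hcne : c ≠ 0 := by
      refine mul_ne_zero (Finset.prod_ne_zero_iff.mpr fun i hi => ?_)
        (Finset.prod_ne_zero_iff.mpr fun j hj => ?_)
      · have : i ≠ a := Finset.ne_of_mem_erase hi
        exact sub_ne_zero.mpr (by exact_mod_cast this.symm)
      · have : j ≠ b := Finset.ne_of_mem_erase hj
        exact sub_ne_zero.mpr (by exact_mod_cast this.symm)
    refine ⟨⟨p, hpmem⟩, c, hcne, ?_, ?_⟩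
    · show eval z0 p = c
      rw [← hz0eq, hp, eval_lag, hc]
      simp
    · intro x hx hne
      rw [hG, Finset.mem_image] at hx
      obtain ⟨q', hq', rfl⟩ := hx
      rw [Finset.mem_product] at hq'
      have hqne : q' ≠ (a, b) := by
        intro h; apply hne; rw [h]; exact hz0eq
      show eval _ p = 0
      rw [hp, eval_lag]
      by_cases hA : q'.1 = a
      · have hB : q'.2 ≠ b := by
          intro h; exact hqne (Prod.ext hA h)
        refine mul_eq_zero.mpr (Or.inr ?_)
        refine Finset.prod_eq_zero (Finset.mem_erase.mpr ⟨hB, hq'.2⟩) ?_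
        simp
      · refine mul_eq_zero.mpr (Or.inl ?_)
        refine Finset.prod_eq_zero (Finset.mem_erase.mpr ⟨hA, hq'.1⟩) ?_
        simp
  -- Sum over G against such a polynomial picks out the value at z0
  have hsumG : ∀ z0 ∈ G, ∀ (pp : PolyLE 2 (2 * d - 1)) (c : ℝ),
      (∀ x ∈ G, x ≠ z0 → eval x (pp : MvPolynomial (Fin 2) ℝ) = 0) →
      eval z0 (pp : MvPolynomial (Fin 2) ℝ) = c →
      ∀ v : (Fin 2 → ℝ) → ℝ,
        ∑ x ∈ G, v x * eval x (pp : MvPolynomial (Fin 2) ℝ) = v z0 * c := by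
    intro z0 hz0 pp c h0 hv v
    rw [Finset.sum_eq_single_of_mem z0 hz0]
    · rw [hv]
    · intro x hx hne
      rw [h0 x hx hne, mul_zero]
  -- Step C : every grid point is a node
  have hGsub : G ⊆ N' := by
    intro z0 hz0
    obtain ⟨pp, c, hcne, hv, h0⟩ := hlag z0 hz0
    by_contra hz0N
    have hLp : L pp = w z0 * c := by
      rw [hL pp]; exact hsumG z0 hz0 pp c h0 hv w
    have hLp' : L pp = 0 := by
      rw [hquad pp]
      refine Finset.sum_eq_zero fun x hx => ?_
      have hxG := hNsub hx
      have hxne : x ≠ z0 := by rintro rfl; exact hz0N hx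
      rw [h0 x hxG hxne, mul_zero]
    rw [hLp] at hLp'
    rcases mul_eq_zero.mp hLp' with h | h
    · exact absurd h (ne_of_gt (hw z0 hz0))
    · exact hcne h
  have hNG : N' = G := Finset.Subset.antisymm hNsub hGsub
  refine ⟨hNG, ?_, ?_⟩
  · intro z0 hz0
    obtain ⟨pp, c, hcne, hv, h0⟩ := hlag z0 hz0
    have h1 : L pp = w z0 * c := by
      rw [hL pp]; exact hsumG z0 hz0 pp c h0 hv w
    have h2 : L pp = w' z0 * c := by
      rw [hquad pp, hNG]; exact hsumG z0 hz0 pp c h0 hv w'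
    have := h1.symm.trans h2
    exact mul_right_cancel₀ hcne this.symm
  · rw [hNG, hG, Finset.card_image_of_injective _ grid_inj, Finset.card_product,
      Nat.card_Icc]
    have : d - 1 + 1 - 1 = d - 1 := by omega
    rw [this, sq]

end
end

section
/- Let d be a positive integer, ξ ∈ ℝ, and let h ∈ ℝ[X] be a nonzero univariate real polynomial of degree at most 2d−1. Let x₁,…,x_ℓ ∈ ℝ be pairwise distinct roots of h such that h'(x_i) ≤ 0 for every i with x_i < ξ and h'(x_i) ≥ 0 for every i with x_i > ξ. Then ℓ ≤ d. -/
noncomputable section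

open Polynomial Filter Topology

lemma signs (f : Polynomial ℝ) (hf : f ≠ 0) (b : ℝ) (hb : f.eval b = 0) :
    ∃ m : ℕ, ∃ c : ℝ, m = rootMultiplicity b f ∧ 1 ≤ m ∧ c ≠ 0 ∧
      (m = 1 → (Polynomial.derivative f).eval b = c) ∧
      ((∀ᶠ x in 𝓝[>] b, f.eval x < 0) → c < 0) ∧
      ((∀ᶠ x in 𝓝[<] b, 0 < f.eval x) → 0 < (-1:ℝ)^m * c) := by
  set m := rootMultiplicity b f with hm
  set g := f /ₘ (X - C b) ^ m with hg
  have hfac : (X - C b) ^ m * g = f := f.pow_mul_divByMonic_rootMultiplicity_eq b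
  have hc0 : g.eval b ≠ 0 := eval_divByMonic_pow_rootMultiplicity_ne_zero b hf
  have hm1 : 1 ≤ m := (rootMultiplicity_pos hf).2 hb
  have heval : ∀ y : ℝ, f.eval y = (y - b)^m * g.eval y := by
    intro y
    conv_lhs => rw [← hfac]
    simp
  have hev_sign : ∀ᶠ y in 𝓝 b, 0 < g.eval y * g.eval b := by
    have : IsOpen {y : ℝ | 0 < g.eval y * g.eval b} :=
      isOpen_lt continuous_const ((g.continuous_aeval).mul continuous_const)
    exact this.eventually_mem (by simpa using (mul_self_pos.2 hc0))
  refine ⟨m, g.eval b, rfl, hm1, hc0, ?_, ?_, ?_⟩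
  · intro h1
    rw [← hfac, h1]
    simp [derivative_mul]
  · intro hev
    obtain ⟨y, ⟨hy1, hy2⟩, hy3⟩ :=
      (((hev_sign.filter_mono nhdsWithin_le_nhds).and hev).and self_mem_nhdsWithin).exists
    have hyb : b < y := hy3
    have hp : 0 < (y - b)^m := pow_pos (by linarith) m
    have := heval y
    nlinarith [hy1, hy2, hp]
  · intro hev
    obtain ⟨y, ⟨hy1, hy2⟩, hy3⟩ :=
      (((hev_sign.filter_mono nhdsWithin_le_nhds).and hev).and self_mem_nhdsWithin).exists
    have hyb : y < b := hy3
    have hp : 0 < (b - y)^m := pow_pos (by linarith) m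
    have hne : (y - b)^m = (-1:ℝ)^m * (b - y)^m := by
      rw [← neg_pow, neg_sub]
    have hfy := heval y
    have hgy : g.eval y ≠ 0 := by
      rintro h0
      rw [h0, zero_mul] at hy1
      exact lt_irrefl 0 hy1
    have hq : 0 < (b - y)^m * (g.eval y)^2 := mul_pos hp (by positivity)
    have e1 : f.eval y * (g.eval y * g.eval b)
        = ((-1:ℝ)^m * g.eval b) * ((b - y)^m * (g.eval y)^2) := by
      rw [hfy, hne]; ring
    have h2 : 0 < ((-1:ℝ)^m * g.eval b) * ((b - y)^m * (g.eval y)^2) :=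
      e1 ▸ mul_pos hy2 hy1
    nlinarith [h2, hq]

lemma mult2_right (f : Polynomial ℝ) (hf : f ≠ 0) (b : ℝ) (hb : f.eval b = 0)
    (hd : 0 ≤ (Polynomial.derivative f).eval b)
    (hr : ∀ᶠ x in 𝓝[>] b, f.eval x < 0) : 2 ≤ rootMultiplicity b f := by
  obtain ⟨m, c, hmr, hm1, hc0, hder, hright, _⟩ := signs f hf b hb
  have hc : c < 0 := hright hr
  have : m ≠ 1 := fun h1 => absurd (hder h1 ▸ hd) (by simpa [hder h1] using not_le.2 hc)
  omega

lemma mult2_left (f : Polynomial ℝ) (hf : f ≠ 0) (b : ℝ) (hb : f.eval b = 0)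
    (hd : 0 ≤ (Polynomial.derivative f).eval b)
    (hl : ∀ᶠ x in 𝓝[<] b, 0 < f.eval x) : 2 ≤ rootMultiplicity b f := by
  obtain ⟨m, c, hmr, hm1, hc0, hder, _, hleft⟩ := signs f hf b hb
  have hc := hleft hl
  have : m ≠ 1 := by
    intro h1
    rw [h1] at hc
    have : c < 0 := by nlinarith
    exact absurd (hder h1 ▸ hd) (not_le.2 this)
  omega

lemma mult3 (f : Polynomial ℝ) (hf : f ≠ 0) (b : ℝ) (hb : f.eval b = 0)
    (hd : 0 ≤ (Polynomial.derivative f).eval b)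
    (hl : ∀ᶠ x in 𝓝[<] b, 0 < f.eval x)
    (hr : ∀ᶠ x in 𝓝[>] b, f.eval x < 0) : 3 ≤ rootMultiplicity b f := by
  obtain ⟨m, c, hmr, hm1, hc0, hder, hright, hleft⟩ := signs f hf b hb
  have hc : c < 0 := hright hr
  have hlc := hleft hl
  have hneg : (-1:ℝ)^m < 0 := by nlinarith
  have hodd : Odd m := by
    rcases Nat.even_or_odd m with he | ho
    · rw [he.neg_one_pow] at hneg; norm_num at hneg
    · exact ho
  have h2 : 2 ≤ rootMultiplicity b f := mult2_right f hf b hb hd hr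
  obtain ⟨k, hk⟩ := hodd
  omega

lemma gap_sign (f : Polynomial ℝ) (a b : ℝ) (hab : a < b)
    (hno : ∀ y ∈ Set.Ioo a b, f.eval y ≠ 0) :
    (∀ y ∈ Set.Ioo a b, 0 < f.eval y) ∨ (∀ y ∈ Set.Ioo a b, f.eval y < 0) := by
  by_contra hcon
  push_neg at hcon
  obtain ⟨⟨z, hz, hz2⟩, ⟨w, hw, hw2⟩⟩ := hcon
  have hzn := hno z hz
  have hwn := hno w hw
  have hz' : f.eval z < 0 := lt_of_le_of_ne hz2 hzn
  have hw' : 0 < f.eval w := lt_of_le_of_ne hw2 (Ne.symm hwn)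
  have hcont : ContinuousOn (fun y => f.eval y) (Set.uIcc z w) := (f.continuous_aeval).continuousOn
  have h0 : (0:ℝ) ∈ Set.uIcc (f.eval z) (f.eval w) := by
    rw [Set.mem_uIcc]
    left; exact ⟨hz'.le, hw'.le⟩
  obtain ⟨y, hy, hy0⟩ := intermediate_value_uIcc hcont h0
  have : y ∈ Set.Ioo a b := (Set.ordConnected_Ioo.uIcc_subset hz hw) hy
  exact hno y this hy0

lemma key (f : Polynomial ℝ) (hf : f ≠ 0) : ∀ n : ℕ, ∀ s : Finset ℝ, s.card = n →
    ∀ hs : s.Nonempty, (∀ a ∈ s, f.eval a = 0) →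
    (∀ a ∈ s, 0 ≤ (Polynomial.derivative f).eval a) →
    (2 * s.card - 1 ≤ (f.roots.filter (fun x => x ≤ s.max' hs)).card ∧
      ((∀ᶠ x in 𝓝[>] (s.max' hs), f.eval x < 0) →
        2 * s.card ≤ (f.roots.filter (fun x => x ≤ s.max' hs)).card)) := by
  intro n
  induction n using Nat.strong_induction_on with
  | _ n ih =>
  intro s hcard hs h0 h1
  classical
  set b := s.max' hs with hbdef
  have hbmem : b ∈ s := s.max'_mem hs
  have hb0 : f.eval b = 0 := h0 b hbmem
  have hbd : 0 ≤ (Polynomial.derivative f).eval b := h1 b hbmem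
  have hmb : 1 ≤ rootMultiplicity b f := (rootMultiplicity_pos hf).2 hb0
  -- count of b in the filtered multiset
  have hcountb : (f.roots.filter (fun x => x ≤ b)).count b = rootMultiplicity b f := by
    rw [Multiset.count_filter_of_pos (p := fun x => x ≤ b) le_rfl, count_roots]
  have hcardb : rootMultiplicity b f ≤ (f.roots.filter (fun x => x ≤ b)).card := by
    rw [← hcountb]; exact Multiset.count_le_card _ _
  by_cases hse : s.erase b = ∅
  · -- base case : s = {b}
    have hcard1 : s.card = 1 := by
      have := Finset.card_erase_of_mem hbmem
      rw [hse] at this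
      simp at this
      have hpos := Finset.card_pos.2 hs
      omega
    rw [hcard1]
    constructor
    · exact le_trans (by omega : 2*1-1 ≤ rootMultiplicity b f) hcardb
    · intro hr
      have := mult2_right f hf b hb0 hbd hr
      omega
  · have hs' : (s.erase b).Nonempty := Finset.nonempty_of_ne_empty hse
    set b' := (s.erase b).max' hs' with hb'def
    have hb'mem : b' ∈ s.erase b := (s.erase b).max'_mem hs'
    have hb'ne : b' ≠ b := (Finset.mem_erase.1 hb'mem).1
    have hb'in : b' ∈ s := (Finset.mem_erase.1 hb'mem).2
    have hb'b : b' < b := lt_of_le_of_ne (s.le_max' b' hb'in) hb'ne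
    have hcard' : (s.erase b).card = n - 1 := by
      rw [Finset.card_erase_of_mem hbmem, hcard]
    have hn2 : 2 ≤ n := by
      have := Finset.card_lt_card (Finset.erase_ssubset hbmem)
      have h1' : 1 ≤ (s.erase b).card := Finset.card_pos.2 hs'
      omega
    obtain ⟨IH1, IH2⟩ := ih (n-1) (by omega) (s.erase b) hcard' hs'
      (fun a ha => h0 a (Finset.mem_of_mem_erase ha))
      (fun a ha => h1 a (Finset.mem_of_mem_erase ha))
    rw [hcard'] at IH1 IH2
    rw [← hb'def] at IH1 IH2
    -- split the count at b'
    have hsplit : (f.roots.filter (fun x => x ≤ b')).card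
        + (f.roots.filter (fun x => b' < x ∧ x ≤ b)).card
        = (f.roots.filter (fun x => x ≤ b)).card := by
      rw [← Multiset.card_add, Multiset.filter_add_filter]
      have e1 : Multiset.filter (fun a => (a ≤ b') ∧ (b' < a ∧ a ≤ b)) f.roots = 0 := by
        rw [Multiset.filter_eq_nil]
        rintro a _ ⟨h1', h2', _⟩
        linarith
      have e2 : Multiset.filter (fun a => (a ≤ b') ∨ (b' < a ∧ a ≤ b)) f.roots
          = Multiset.filter (fun x => x ≤ b) f.roots := by
        apply Multiset.filter_congr
        intro a _
        constructor
        · rintro (h' | ⟨_, h'⟩)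
          · linarith
          · exact h'
        · intro h'
          by_cases hab' : a ≤ b'
          · exact Or.inl hab'
          · exact Or.inr ⟨not_le.1 hab', h'⟩
      rw [e1, e2, add_zero]
    set M := f.roots.filter (fun x => b' < x ∧ x ≤ b) with hM
    have hcountbM : M.count b = rootMultiplicity b f := by
      rw [hM, Multiset.count_filter_of_pos (p := fun x => b' < x ∧ x ≤ b) ⟨hb'b, le_rfl⟩, count_roots]
    have hMm : rootMultiplicity b f ≤ M.card := by
      rw [← hcountbM]; exact Multiset.count_le_card _ _
    by_cases hroots : ∃ y ∈ Set.Ioo b' b, f.eval y = 0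
    · -- interior root case
      obtain ⟨y, hy, hy0⟩ := hroots
      have hyne : y ≠ b := ne_of_lt hy.2
      have hycount : 1 ≤ M.count y := by
        rw [hM, Multiset.count_filter_of_pos (p := fun x => b' < x ∧ x ≤ b) ⟨hy.1, hy.2.le⟩, count_roots]
        exact (rootMultiplicity_pos hf).2 hy0
      have hMcard : rootMultiplicity b f + 1 ≤ M.card := by
        have hpart := Multiset.filter_add_not (fun x => b = x) M
        have c1 : (M.filter (fun x => b = x)).card = M.count b := by
          rw [Multiset.count, Multiset.countP_eq_card_filter]
        have c2 : M.count y ≤ (M.filter (fun x => ¬ b = x)).card := by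
          have : (M.filter (fun x => ¬ b = x)).count y = M.count y :=
            Multiset.count_filter_of_pos (fun h => hyne h.symm)
          rw [← this]; exact Multiset.count_le_card _ _
        have := congrArg Multiset.card hpart
        rw [Multiset.card_add] at this
        omega
      constructor
      · omega
      · intro hr
        have := mult2_right f hf b hb0 hbd hr
        omega
    · push_neg at hroots
      rcases gap_sign f b' b hb'b hroots with hpos | hneg
      · -- positive on the gap: b has multiplicity ≥ 2
        have hl : ∀ᶠ x in 𝓝[<] b, 0 < f.eval x :=
          Filter.eventually_of_mem (Ioo_mem_nhdsLT_of_mem ⟨hb'b, le_rfl⟩) hpos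
        have hm2 := mult2_left f hf b hb0 hbd hl
        constructor
        · omega
        · intro hr
          have := mult3 f hf b hb0 hbd hl hr
          omega
      · -- negative on the gap: use strengthened IH at b'
        have hr' : ∀ᶠ x in 𝓝[>] b', f.eval x < 0 :=
          Filter.eventually_of_mem (Ioo_mem_nhdsGT_of_mem ⟨le_rfl, hb'b⟩) hneg
        have hIH := IH2 hr'
        constructor
        · omega
        · intro hr
          have := mult2_right f hf b hb0 hbd hr
          omega

/-- Lemma `lemma2`: if `h ∈ ℝ[X]` is nonzero of degree at most `2d-1` and `x₁,…,x_ℓ` are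
pairwise distinct roots of `h` with `h'(xᵢ) ≤ 0` whenever `xᵢ < ξ` and `h'(xᵢ) ≥ 0`
whenever `xᵢ > ξ`, then `ℓ ≤ d`. -/
theorem stmt_17 (d : ℕ) (hd : 0 < d) (ξ : ℝ) (h : Polynomial ℝ) (hne : h ≠ 0)
    (hdeg : h.natDegree ≤ 2 * d - 1) (ℓ : ℕ) (x : Fin ℓ → ℝ)
    (hinj : Function.Injective x)
    (hroot : ∀ i, h.eval (x i) = 0)
    (hneg : ∀ i, x i < ξ → (Polynomial.derivative h).eval (x i) ≤ 0)
    (hpos : ∀ i, ξ < x i → 0 ≤ (Polynomial.derivative h).eval (x i)) :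
    ℓ ≤ d := by
  classical
  rcases Nat.eq_zero_or_pos ℓ with hℓ | hℓ
  · omega
  set f : Polynomial ℝ := (X - C ξ) * h with hfdef
  have hXC : (X - C ξ : Polynomial ℝ) ≠ 0 := X_sub_C_ne_zero ξ
  have hfne : f ≠ 0 := mul_ne_zero hXC hne
  have hfdeg : f.natDegree ≤ 2 * d := by
    rw [hfdef, natDegree_mul hXC hne, natDegree_X_sub_C]
    omega
  have hfroot : ∀ i, f.eval (x i) = 0 := by
    intro i
    rw [hfdef]
    simp [hroot i]
  have hfder : ∀ i, 0 ≤ (Polynomial.derivative f).eval (x i) := by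
    intro i
    have : (Polynomial.derivative f).eval (x i)
        = (x i - ξ) * (Polynomial.derivative h).eval (x i) := by
      rw [hfdef, derivative_mul]
      simp [hroot i]
    rw [this]
    rcases lt_trichotomy (x i) ξ with hlt | heq | hgt
    · nlinarith [hneg i hlt]
    · simp [heq]
    · exact mul_nonneg (by linarith) (hpos i hgt)
  haveI : NeZero ℓ := ⟨by omega⟩
  set s : Finset ℝ := Finset.image x Finset.univ with hsdef
  have hscard : s.card = ℓ := by
    rw [hsdef, Finset.card_image_of_injective _ hinj, Finset.card_univ, Fintype.card_fin]
  have hs : s.Nonempty := by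
    rw [hsdef]
    exact ⟨x ⟨0, by omega⟩, Finset.mem_image_of_mem _ (Finset.mem_univ _)⟩
  have hmem : ∀ a ∈ s, ∃ i, x i = a := by
    intro a ha
    rw [hsdef] at ha
    simpa using Finset.mem_image.1 ha
  obtain ⟨K1, _⟩ := key f hfne s.card s rfl hs
    (fun a ha => by obtain ⟨i, hi⟩ := hmem a ha; rw [← hi]; exact hfroot i)
    (fun a ha => by obtain ⟨i, hi⟩ := hmem a ha; rw [← hi]; exact hfder i)
  have h2 : (f.roots.filter (fun y => y ≤ s.max' hs)).card ≤ f.roots.card :=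
    Multiset.card_le_card (Multiset.filter_le _ _)
  have h3 : f.roots.card ≤ f.natDegree := f.card_roots'
  rw [hscard] at K1
  omega

end
end

section
/- Let d be a positive integer and let L ∈ M_{2d−1}(ℝ). Then there is exactly one quadrature rule w : N → (0,∞) for L with #N ≤ d (called the Gaussian quadrature rule for L): such a rule exists, and if w : N → (0,∞) and w' : N' → (0,∞) are quadrature rules for L with #N ≤ d and #N' ≤ d, then N = N' and w = w'. -/
open MeasureTheory

noncomputable section

/-- The space `ℝ[X]_m` of univariate polynomials of degree at most `m`. -/
def UPolyLE (m : ℕ) : Submodule ℝ (Polynomial ℝ) := Polynomial.degreeLE ℝ (m : ℕ)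

/-- A quadrature rule for a linear functional on `ℝ[X]_m`. -/
def UIsQuadratureRule {m : ℕ} (L : Module.Dual ℝ (UPolyLE m))
    (N : Finset ℝ) (w : ℝ → ℝ) : Prop :=
  (∀ x ∈ N, 0 < w x) ∧
  ∀ p : UPolyLE m, L p = ∑ x ∈ N, w x * (p : Polynomial ℝ).eval x

/-- The truncated moment cone `M_m(ℝ)` for measures on the real line. -/
def UMomentCone (m : ℕ) : Set (Module.Dual ℝ (UPolyLE m)) :=
  {L | ∃ μ : Measure ℝ,
    (∀ p : Polynomial ℝ, p.natDegree ≤ m → Integrable (fun x => p.eval x) μ) ∧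
    ∀ p : UPolyLE m, L p = ∫ x, (p : Polynomial ℝ).eval x ∂μ}

/-!
A rule with at most `d` nodes is exact in degree `2d - 1`, so two such rules agree on
`ℓ_x · ∏_{y ∈ N'} (X - y)` for a Lagrange basis polynomial `ℓ_x` of the first node set;
this forces `N ⊆ N'`, and symmetrically `N = N'`, after which `ℓ_x` itself compares weights.

For existence, if `μ` is carried by fewer than `d` points its atoms already give a rule.
Otherwise the moment functional is positive on every nonnegative polynomial of degree `< 2d`
whose zeros lie in a set of fewer than `d` points. Then it has a monic orthogonal polynomial
`p` of degree `d`, and `p` has `d` distinct real roots: otherwise `p` times the product over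
its roots of odd multiplicity would be such a polynomial with integral zero. Dividing by `p` and
interpolating the remainder at the roots gives the rule, with weights `∫ ℓ_x = ∫ ℓ_x²`.
-/

open Polynomial

namespace Lagrange

lemma sum_mul_eval_basis_mul {N : Finset ℝ} {x₀ : ℝ} (hx₀ : x₀ ∈ N) (w : ℝ → ℝ) (g : ℝ[X]) :
    ∑ y ∈ N, w y * (Lagrange.basis N id x₀ * g).eval y = w x₀ * g.eval x₀ := by
  have hself : (Lagrange.basis N id x₀).eval x₀ = 1 :=
    eval_basis_self (Set.injOn_id _) hx₀
  rw [Finset.sum_eq_single_of_mem x₀ hx₀ fun y hy hne => by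
    have hy0 : (Lagrange.basis N id x₀).eval y = 0 := eval_basis_of_ne (v := id) hne.symm hy
    rw [eval_mul, hy0, zero_mul, mul_zero]]
  rw [eval_mul, hself, one_mul]

end Lagrange

namespace Polynomial

lemma subset_of_sum_mul_eval_eq {N N' : Finset ℝ} {w w' : ℝ → ℝ} (hw : ∀ x ∈ N, w x ≠ 0)
    (h : ∀ f : ℝ[X], f.natDegree < N.card + N'.card →
      ∑ x ∈ N, w x * f.eval x = ∑ x ∈ N', w' x * f.eval x) :
    N ⊆ N' := by
  intro x hx
  set f := Lagrange.basis N id x * Lagrange.nodal N' id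
  have hf : f.natDegree < N.card + N'.card := by
    refine natDegree_mul_le.trans_lt ?_
    rw [Lagrange.natDegree_basis (Set.injOn_id _) hx, Lagrange.natDegree_nodal]
    have := Finset.card_pos.2 ⟨x, hx⟩
    omega
  have hvanish : ∑ y ∈ N', w' y * f.eval y = 0 := Finset.sum_eq_zero fun y hy => by
    have hy0 : (Lagrange.nodal N' id).eval y = 0 := Lagrange.eval_nodal_at_node (v := id) hy
    rw [eval_mul, hy0, mul_zero, mul_zero]
  have hx' := h f hf
  rw [hvanish, Lagrange.sum_mul_eval_basis_mul hx] at hx'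
  by_contra hxN'
  refine mul_ne_zero (hw x hx) (Lagrange.eval_nodal_not_at_node fun y hy => ?_) hx'
  rintro rfl
  exact hxN' hy

theorem eq_of_sum_mul_eval_eq {N N' : Finset ℝ} {w w' : ℝ → ℝ} (hw : ∀ x ∈ N, w x ≠ 0)
    (hw' : ∀ x ∈ N', w' x ≠ 0)
    (h : ∀ f : ℝ[X], f.natDegree < N.card + N'.card →
      ∑ x ∈ N, w x * f.eval x = ∑ x ∈ N', w' x * f.eval x) :
    N = N' ∧ ∀ x ∈ N, w x = w' x := by
  obtain rfl : N = N' := (subset_of_sum_mul_eval_eq hw h).antisymm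
    (subset_of_sum_mul_eval_eq hw' fun f hf => (h f (by omega)).symm)
  refine ⟨rfl, fun x hx => ?_⟩
  have hf : (Lagrange.basis N id x * 1).natDegree < N.card + N.card := by
    rw [mul_one, Lagrange.natDegree_basis (Set.injOn_id _) hx]
    have := Finset.card_pos.2 ⟨x, hx⟩
    omega
  have hx' := h _ hf
  rwa [Lagrange.sum_mul_eval_basis_mul hx, Lagrange.sum_mul_eval_basis_mul hx, eval_one, mul_one,
    mul_one] at hx'

/-- The witness is `∏ (X - a) ^ (mult a % 2)` over the distinct roots `a`: it makes every root
multiplicity of `p * r` even. -/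
lemma exists_mul_nonneg_of_leadingCoeff_pos {p : ℝ[X]} (hp : 0 < p.leadingCoeff) :
    ∃ r : ℝ[X], r.natDegree ≤ p.roots.toFinset.card ∧ (∀ x, 0 ≤ (p * r).eval x) ∧
      ∀ x ∉ p.roots.toFinset, (p * r).eval x ≠ 0 := by
  have hp0 : p ≠ 0 := leadingCoeff_ne_zero.1 hp.ne'
  obtain ⟨g, hpg, -, hg⟩ := p.exists_prod_multiset_X_sub_C_mul
  have hg_pos : ∀ x, 0 < g.eval x := by
    have hg0 : g ≠ 0 := by
      rintro rfl
      exact hp0 (by rw [← hpg, mul_zero])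
    refine fun x => zero_lt_eval_of_roots_lt_of_leadingCoeff_nonneg (fun y hy => ?_) ?_
    · simpa [hg] using (mem_roots hg0).2 hy
    · rw [← hpg, leadingCoeff_mul, (monic_multisetProd_X_sub_C _).leadingCoeff, one_mul] at hp
      exact hp.le
  set N := p.roots.toFinset
  have hp_eval : ∀ x, p.eval x = (∏ a ∈ N, (x - a) ^ p.roots.count a) * g.eval x := fun x => by
    rw [← Finset.prod_multiset_map_count p.roots (fun a => x - a)]
    conv_lhs => rw [← hpg]
    simp [eval_multiset_prod, Multiset.map_map]
  refine ⟨∏ a ∈ N, (X - C a) ^ (p.roots.count a % 2), ?_, fun x => ?_, fun x hx => ?_⟩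
  · refine (natDegree_prod_le _ _).trans ((Finset.sum_le_card_nsmul _ _ 1 fun a _ => ?_).trans_eq
      (smul_eq_mul _ _ |>.trans (mul_one _)))
    rw [natDegree_pow, natDegree_X_sub_C, mul_one]
    omega
  · rw [eval_mul, hp_eval, eval_prod, mul_right_comm, ← Finset.prod_mul_distrib]
    refine mul_nonneg (Finset.prod_nonneg fun a _ => ?_) (hg_pos x).le
    rw [eval_pow, eval_sub, eval_X, eval_C, ← pow_add]
    exact Even.pow_nonneg (Nat.even_iff.2 (by omega)) _
  · rw [eval_mul, eval_prod]
    refine mul_ne_zero (fun h => hx (Multiset.mem_toFinset.2 ((mem_roots hp0).2 h)))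
      (Finset.prod_ne_zero_iff.2 fun a ha => ?_)
    rw [eval_pow, eval_sub, eval_X, eval_C]
    refine pow_ne_zero _ (sub_ne_zero.2 ?_)
    rintro rfl
    exact hx ha

section MomentFunctional

variable (Λ : ℝ[X] →ₗ[ℝ] ℝ)

lemma exists_monic_orthogonal {d : ℕ}
    (hΛ : ∀ g : ℝ[X], g ≠ 0 → g.natDegree < d → Λ (g * g) ≠ 0) :
    ∃ p : ℝ[X], p.Monic ∧ p.natDegree = d ∧ ∀ q : ℝ[X], q.natDegree < d → Λ (p * q) = 0 := by
  let W := degreeLT ℝ d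
  have : FiniteDimensional ℝ W := (degreeLTEquiv ℝ d).symm.finiteDimensional
  let B : LinearMap.BilinForm ℝ W := ((LinearMap.mul ℝ ℝ[X]).compl₁₂ W.subtype W.subtype).compr₂ Λ
  have hB : B.Nondegenerate := .ofSeparatingLeft fun g hg => by
    by_contra hg0
    have hg0' : (g : ℝ[X]) ≠ 0 := fun h => hg0 (Subtype.ext h)
    exact hΛ g hg0' ((natDegree_lt_iff_degree_lt hg0').2 (mem_degreeLT.1 g.2)) (hg g)
  let φ : Module.Dual ℝ W := Λ ∘ₗ LinearMap.mulLeft ℝ (X ^ d) ∘ₗ W.subtype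
  set g := (B.toDual hB).symm φ
  have hg : degree (g : ℝ[X]) < d := mem_degreeLT.1 g.2
  refine ⟨X ^ d - (g : ℝ[X]), monic_X_pow_sub hg, ?_, fun q hq => ?_⟩
  · refine natDegree_eq_of_degree_eq_some ?_
    rw [degree_sub_eq_left_of_degree_lt (by rwa [degree_X_pow]), degree_X_pow]
  · have hqW : q ∈ W := mem_degreeLT.2 (degree_le_natDegree.trans_lt (by exact_mod_cast hq))
    have hgq : Λ (g * q) = Λ (X ^ d * q) :=
      LinearMap.BilinForm.apply_toDual_symm_apply (hB := hB) φ ⟨q, hqW⟩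
    rw [sub_mul, map_sub, hgq, sub_self]

lemma apply_eq_sum_basis_of_orthogonal {p : ℝ[X]} (hp : p.Monic) {N : Finset ℝ}
    (hN : N.card = p.natDegree) (hroot : ∀ x ∈ N, p.eval x = 0)
    (horth : ∀ q : ℝ[X], q.natDegree < p.natDegree → Λ (p * q) = 0)
    (f : ℝ[X]) (hf : f.natDegree < 2 * p.natDegree) :
    Λ f = ∑ x ∈ N, Λ (Lagrange.basis N id x) * f.eval x := by
  have hquot : (f /ₘ p).natDegree < p.natDegree := by
    rw [natDegree_divByMonic f hp]
    omega
  have hrem : f %ₘ p = Lagrange.interpolate N id fun x => f.eval x := by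
    refine Lagrange.eq_interpolate_of_eval_eq _ (Set.injOn_id _) ?_ fun x hx => ?_
    · rw [hN, ← degree_eq_natDegree hp.ne_zero]
      exact degree_modByMonic_lt f hp
    · conv_rhs => rw [← modByMonic_add_div f p]
      rw [id_eq, eval_add, eval_mul, hroot x hx, zero_mul, add_zero]
  calc Λ f = Λ (f %ₘ p + p * (f /ₘ p)) := by rw [modByMonic_add_div f p]
    _ = Λ (f %ₘ p) := by rw [map_add, horth _ hquot, add_zero]
    _ = ∑ x ∈ N, Λ (Lagrange.basis N id x) * f.eval x := by
      rw [hrem, Lagrange.interpolate_apply, map_sum]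
      refine Finset.sum_congr rfl fun x _ => ?_
      rw [← smul_eq_C_mul, map_smul, smul_eq_mul, mul_comm]

theorem exists_gaussian_quadrature (d : ℕ)
    (hΛ : ∀ (h : ℝ[X]) (Z : Finset ℝ), h.natDegree < 2 * d → Z.card < d →
      (∀ x, 0 ≤ h.eval x) → (∀ x ∉ Z, h.eval x ≠ 0) → 0 < Λ h) :
    ∃ (N : Finset ℝ) (w : ℝ → ℝ), N.card = d ∧ (∀ x ∈ N, 0 < w x) ∧
      ∀ f : ℝ[X], f.natDegree < 2 * d → Λ f = ∑ x ∈ N, w x * f.eval x := by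
  have hsq : ∀ g : ℝ[X], g ≠ 0 → g.natDegree < d → 0 < Λ (g * g) := fun g hg hgd => by
    refine hΛ _ g.roots.toFinset (by rw [natDegree_mul hg hg]; omega)
      ((Multiset.toFinset_card_le _).trans_lt ((card_roots' g).trans_lt hgd))
      (fun x => by rw [eval_mul]; exact mul_self_nonneg _) fun x hx => ?_
    rw [eval_mul]
    exact mul_self_ne_zero.2 fun h => hx (Multiset.mem_toFinset.2 ((mem_roots hg).2 h))
  obtain ⟨p, hp, rfl, horth⟩ := exists_monic_orthogonal Λ fun g hg hgd => (hsq g hg hgd).ne'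
  set N := p.roots.toFinset
  have hroot : ∀ x ∈ N, p.eval x = 0 := fun x hx => isRoot_of_mem_roots (Multiset.mem_toFinset.1 hx)
  have hN : N.card = p.natDegree := by
    refine le_antisymm ((Multiset.toFinset_card_le _).trans (card_roots' p))
      (not_lt.1 fun hlt => ?_)
    obtain ⟨r, hr, hnonneg, hne⟩ :=
      exists_mul_nonneg_of_leadingCoeff_pos (hp.leadingCoeff.symm ▸ one_pos)
    change r.natDegree ≤ N.card at hr
    exact (hΛ (p * r) N (natDegree_mul_le.trans_lt (by omega)) hlt hnonneg hne).ne'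
      (horth r (by omega))
  have hquad := apply_eq_sum_basis_of_orthogonal Λ hp hN hroot horth
  refine ⟨N, fun x => Λ (Lagrange.basis N id x), hN, fun x hx => ?_, hquad⟩
  change 0 < Λ (Lagrange.basis N id x)
  have hbasis : (Lagrange.basis N id x).natDegree = N.card - 1 :=
    Lagrange.natDegree_basis (Set.injOn_id _) hx
  have hself : (Lagrange.basis N id x).eval x = 1 := Lagrange.eval_basis_self (Set.injOn_id _) hx
  have hcard := Finset.card_pos.2 ⟨x, hx⟩
  have hsq_basis := hquad (Lagrange.basis N id x * Lagrange.basis N id x)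
    (natDegree_mul_le.trans_lt (by omega))
  rw [Lagrange.sum_mul_eval_basis_mul hx, hself, mul_one] at hsq_basis
  rw [← hsq_basis]
  exact hsq _ (Lagrange.basis_ne_zero (Set.injOn_id _) hx) (by omega)

end MomentFunctional

end Polynomial

namespace MeasureTheory

lemma integral_eq_sum_of_measure_compl_eq_zero {X : Type*} [MeasurableSpace X]
    [MeasurableSingletonClass X] {μ : Measure X} {Z : Finset X} (hZ : μ (↑Z)ᶜ = 0) {f : X → ℝ}
    (hf : Integrable f μ) :
    ∫ x, f x ∂μ = ∑ x ∈ Z, μ.real {x} * f x := by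
  have hZae : ∀ᵐ x ∂μ, x ∈ (Z : Set X) := mem_ae_iff.2 hZ
  calc ∫ x, f x ∂μ = ∫ x in Z, f x ∂μ := by rw [Measure.restrict_eq_self_of_ae_mem hZae]
    _ = ∑ x ∈ Z, μ.real {x} * f x := setIntegral_finset Z hf.integrableOn

end MeasureTheory

theorem UIsQuadratureRule.eq_of_card_le {d : ℕ} {L : Module.Dual ℝ (UPolyLE (2 * d - 1))}
    {N N' : Finset ℝ} {w w' : ℝ → ℝ} (h : UIsQuadratureRule L N w)
    (h' : UIsQuadratureRule L N' w') (hN : N.card ≤ d) (hN' : N'.card ≤ d) :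
    N = N' ∧ ∀ x ∈ N, w x = w' x := by
  refine eq_of_sum_mul_eval_eq (fun x hx => (h.1 x hx).ne') (fun x hx => (h'.1 x hx).ne')
    fun f hf => ?_
  have hf' : f ∈ UPolyLE (2 * d - 1) := mem_degreeLE.2 (natDegree_le_iff_degree_le.1 (by omega))
  rw [← h.2 ⟨f, hf'⟩, h'.2 ⟨f, hf'⟩]

theorem exists_uIsQuadratureRule_of_mem_uMomentCone {d : ℕ} (hd : 0 < d)
    {L : Module.Dual ℝ (UPolyLE (2 * d - 1))} (hL : L ∈ UMomentCone (2 * d - 1)) :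
    ∃ (N : Finset ℝ) (w : ℝ → ℝ), UIsQuadratureRule L N w ∧ N.card ≤ d := by
  obtain ⟨μ, hInt, hLμ⟩ := hL
  have hdeg : ∀ p : UPolyLE (2 * d - 1), (p : ℝ[X]).natDegree < 2 * d := fun p => by
    have := natDegree_le_of_degree_le (mem_degreeLE.1 p.2)
    omega
  by_cases hatom : ∃ Z : Finset ℝ, Z.card < d ∧ μ (↑Z)ᶜ = 0
  · obtain ⟨Z, hZd, hZ⟩ := hatom
    refine ⟨Z.filter fun x => μ.real {x} ≠ 0, fun x => μ.real {x},
      ⟨fun x hx => measureReal_nonneg.lt_of_ne (Finset.mem_filter.1 hx).2.symm, fun p => ?_⟩,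
      (Finset.card_filter_le _ _).trans hZd.le⟩
    rw [hLμ, integral_eq_sum_of_measure_compl_eq_zero hZ (hInt _ (by have := hdeg p; omega))]
    exact (Finset.sum_filter_of_ne fun x _ hx => left_ne_zero_of_mul hx).symm
  push Not at hatom
  obtain ⟨Λ, hΛL⟩ := LinearMap.exists_extend L
  have hΛ : ∀ f : ℝ[X], f.natDegree < 2 * d → Λ f = ∫ x, f.eval x ∂μ := fun f hf => by
    have hf' : f ∈ UPolyLE (2 * d - 1) := mem_degreeLE.2 (natDegree_le_iff_degree_le.1 (by omega))
    rw [← hLμ ⟨f, hf'⟩, ← hΛL]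
    rfl
  obtain ⟨N, w, hN, hw, hquad⟩ := exists_gaussian_quadrature Λ d
    fun h Z hh hZ hnonneg hne => by
      rw [hΛ h hh, integral_pos_iff_support_of_nonneg hnonneg (hInt h (by omega))]
      exact (pos_iff_ne_zero.2 (hatom Z hZ)).trans_le (measure_mono fun x hx => hne x hx)
  refine ⟨N, w, ⟨hw, fun p => ?_⟩, hN.le⟩
  rw [← hquad p (hdeg p), ← hΛL]
  rfl

/-- Theorem `eindeutig` (existence and uniqueness of the Gaussian quadrature rule): every
`L ∈ M_{2d-1}(ℝ)` has exactly one quadrature rule with at most `d` nodes. -/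
theorem stmt_18 (d : ℕ) (hd : 0 < d)
    (L : Module.Dual ℝ (UPolyLE (2 * d - 1))) (hL : L ∈ UMomentCone (2 * d - 1)) :
    (∃ (N : Finset ℝ) (w : ℝ → ℝ), UIsQuadratureRule L N w ∧ N.card ≤ d) ∧
    ∀ (N : Finset ℝ) (w : ℝ → ℝ) (N' : Finset ℝ) (w' : ℝ → ℝ),
      UIsQuadratureRule L N w → N.card ≤ d →
      UIsQuadratureRule L N' w' → N'.card ≤ d →
      N = N' ∧ ∀ x ∈ N, w x = w' x :=
  ⟨exists_uIsQuadratureRule_of_mem_uMomentCone hd hL,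
    fun _ _ _ _ h hN h' hN' => h.eq_of_card_le h' hN hN'⟩

end
end
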